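/- arXiv:1112.2303 — 5 statements merged into one kernel-verified Lean document; each statement's English description precedes it below -/
import Mathlib

section
/- In the ring of formal power series in q over the polynomial ring ℚ[z], the identity ∑_{n=1}^∞ z^n q^{n²} · (zq^{n+1};q)_∞ · ((q;q)_{n−1})^{−1} · (1+z q^n)^{−1} = ∑_{n=1}^∞ (−1)^{n−1} z^n q^{n(n+1)/2} · (∏_{j=1}^{n} (1+z q^j))^{−1} holds. -/
open PowerSeries

/-- The coefficientwise sum of a family of formal power series; it agrees with
the sum of the family whenever `coeff N (f n) = 0` for `n > N` (so that the
partial sums converge coefficientwise in the `q`-adic topology). -/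
noncomputable def seriesSum {R : Type*} [CommRing R] (f : ℕ → PowerSeries R) : PowerSeries R :=
  PowerSeries.mk fun N => ∑ n ∈ Finset.range (N + 1), PowerSeries.coeff N (f n)

/-- The coefficientwise infinite product of a family of formal power series;
it agrees with the product of the family whenever each factor `f k` is
`1 + (terms of order > k)` (so that the partial products converge
coefficientwise in the `q`-adic topology). -/
noncomputable def seriesProd {R : Type*} [CommRing R] (f : ℕ → PowerSeries R) : PowerSeries R :=
  PowerSeries.mk fun N => PowerSeries.coeff N (∏ k ∈ Finset.range (N + 1), f k)

/-- The series `z`: the coefficient variable of `ℚ[z]` viewed as a constant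
formal power series in `q`. -/
noncomputable def zz : PowerSeries (Polynomial ℚ) :=
  PowerSeries.C Polynomial.X

/-!
Replace `z` by an arbitrary power series `a`. Both sides become series `F(a)` satisfying
`(1 + a q) F(a) + a q F(a q) = a q`. For the right side this is a termwise computation. For
the left side it reduces to the Durfee-type identity
`∑ₘ aᵐ q^(m²) (a q^(m+1); q)_∞ / (q; q)ₘ = 1` (for `q ∣ a`), whose partial sums telescope
against explicit tails built from the sums `∑ⱼ bʲ / (c; q)ⱼ` and from Euler's identity
`(b; q)_∞ ∑ⱼ bʲ / (q; q)ⱼ = 1`. The difference `D` of the two sides then satisfies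
`D(a) = -a q (1 + a q)⁻¹ D(a q)`, so it is divisible by every power of `q`.
-/
open Finset

namespace QSeries

variable {R : Type*} [CommRing R]

theorem eq_of_forall_X_pow_dvd_sub {a b : R⟦X⟧} (h : ∀ n, X ^ n ∣ a - b) : a = b := by
  ext N
  have := X_pow_dvd_iff.mp (h (N + 1)) N N.lt_succ_self
  rwa [map_sub, sub_eq_zero] at this

theorem coeff_eq_zero_of_X_pow_dvd {f : R⟦X⟧} {n j : ℕ} (h : X ^ n ∣ f) (hj : j < n) :
    coeff j f = 0 :=
  X_pow_dvd_iff.mp h j hj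

theorem eq_zero_of_forall_eq_X_mul {u : R⟦X⟧ → R⟦X⟧}
    (h : ∀ a, ∃ c, u a = X * c * u (a * X)) (a : R⟦X⟧) : u a = 0 := by
  refine eq_of_forall_X_pow_dvd_sub fun n => ?_
  rw [sub_zero]
  induction n generalizing a with
  | zero => exact one_dvd _
  | succ n ih =>
    obtain ⟨c, hc⟩ := h a
    rw [hc, pow_succ', mul_assoc]
    exact mul_dvd_mul_left X ((ih (a * X)).mul_left c)

section seriesSum

variable {f g : ℕ → R⟦X⟧}

theorem coeff_seriesSum (N : ℕ) :
    coeff N (seriesSum f) = ∑ n ∈ range (N + 1), coeff N (f n) :=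
  coeff_mk _ _

theorem X_pow_dvd_seriesSum_sub_sum (hf : ∀ n, X ^ n ∣ f n) (M : ℕ) :
    X ^ M ∣ seriesSum f - ∑ n ∈ range M, f n := by
  refine X_pow_dvd_iff.mpr fun j hj => ?_
  rw [map_sub, coeff_seriesSum, map_sum, sub_eq_zero]
  refine sum_subset (range_subset_range.mpr hj) fun n hnM hnj => ?_
  exact coeff_eq_zero_of_X_pow_dvd (hf n) (by simp at hnM hnj; omega)

theorem seriesSum_sub : seriesSum (fun n => f n - g n) = seriesSum f - seriesSum g := by
  ext N
  simp [coeff_seriesSum, sum_sub_distrib]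

theorem seriesSum_mul_left (hf : ∀ n, X ^ n ∣ f n) (c : R⟦X⟧) :
    seriesSum (fun n => c * f n) = c * seriesSum f := by
  refine eq_of_forall_X_pow_dvd_sub fun M => ?_
  have hcf := X_pow_dvd_seriesSum_sub_sum (fun n => (hf n).mul_left c) M
  have := (X_pow_dvd_seriesSum_sub_sum hf M).mul_left c
  rw [mul_sub, mul_sum] at this
  simpa using dvd_sub hcf this

theorem seriesSum_eq_add_seriesSum_succ (hf : ∀ n, X ^ n ∣ f n) :
    seriesSum f = f 0 + seriesSum (fun n => f (n + 1)) := by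
  ext N
  rw [map_add, coeff_seriesSum, coeff_seriesSum, sum_range_succ', sum_range_succ,
    coeff_eq_zero_of_X_pow_dvd (hf (N + 1)) N.lt_succ_self, add_zero, add_comm]

theorem seriesSum_sub_succ (hf : ∀ n, X ^ n ∣ f n) :
    seriesSum (fun n => f n - f (n + 1)) = f 0 := by
  refine eq_of_forall_X_pow_dvd_sub fun M => ?_
  have := X_pow_dvd_seriesSum_sub_sum (f := fun n => f n - f (n + 1))
    (fun n => dvd_sub (hf n) ((pow_dvd_pow X n.le_succ).trans (hf (n + 1)))) M
  rw [sum_range_sub'] at this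
  convert dvd_sub this (hf M) using 1
  ring

end seriesSum

section seriesProd

variable {f : ℕ → R⟦X⟧}

theorem X_pow_dvd_prod_sub_one {ι : Type*} {s : Finset ι} {f : ι → R⟦X⟧} {n : ℕ}
    (h : ∀ i ∈ s, X ^ n ∣ f i - 1) : X ^ n ∣ ∏ i ∈ s, f i - 1 := by
  refine prod_induction f (fun p => X ^ n ∣ p - 1) (fun a b ha hb => ?_) (by simp) h
  have : a * b - 1 = (a - 1) * b + (b - 1) := by ring
  rw [this]
  exact dvd_add (ha.mul_right b) hb

theorem X_pow_dvd_seriesProd_sub_prod (hf : ∀ k, X ^ (k + 1) ∣ f k - 1) (M : ℕ) :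
    X ^ M ∣ seriesProd f - ∏ k ∈ range M, f k := by
  refine X_pow_dvd_iff.mpr fun j hj => ?_
  have htail : X ^ (j + 1) ∣ ∏ k ∈ Ico (j + 1) M, f k - 1 :=
    X_pow_dvd_prod_sub_one fun k hk =>
      (pow_dvd_pow X (by simp at hk; omega)).trans (hf k)
  rw [map_sub, seriesProd, coeff_mk, ← prod_range_mul_prod_Ico f (show j + 1 ≤ M from hj),
    ← map_sub, show ∀ p t : R⟦X⟧, p - p * t = -(p * (t - 1)) by intros; ring]
  exact coeff_eq_zero_of_X_pow_dvd ((htail.mul_left _).neg_right) j.lt_succ_self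

theorem seriesProd_eq_mul_seriesProd_succ (hf : ∀ k, X ^ (k + 1) ∣ f k - 1) :
    seriesProd f = f 0 * seriesProd (fun k => f (k + 1)) := by
  refine eq_of_forall_X_pow_dvd_sub fun M => ?_
  have hM := X_pow_dvd_seriesProd_sub_prod hf (M + 1)
  have hM' := (X_pow_dvd_seriesProd_sub_prod (f := fun k => f (k + 1))
    (fun k => (pow_dvd_pow X k.succ.le_succ).trans (hf (k + 1))) M).mul_left (f 0)
  rw [prod_range_succ'] at hM
  convert dvd_sub ((pow_dvd_pow X M.le_succ).trans hM) hM' using 1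
  ring

theorem X_pow_dvd_seriesProd_sub_one (hf : ∀ k, X ^ (k + 1) ∣ f k - 1) {n : ℕ}
    (h : ∀ k, X ^ n ∣ f k - 1) : X ^ n ∣ seriesProd f - 1 := by
  have := dvd_add (X_pow_dvd_seriesProd_sub_prod hf n)
    (X_pow_dvd_prod_sub_one (s := range n) fun k _ => h k)
  rwa [sub_add_sub_cancel] at this

end seriesProd

/-- `(a; q)ₙ`, with `q = X`. -/
noncomputable def qPochhammer (a : R⟦X⟧) (n : ℕ) : R⟦X⟧ :=
  ∏ k ∈ range n, (1 - a * X ^ k)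

noncomputable def qPochhammerInf (a : R⟦X⟧) : R⟦X⟧ :=
  seriesProd fun k => 1 - a * X ^ k

theorem qPochhammer_zero (a : R⟦X⟧) : qPochhammer a 0 = 1 :=
  prod_range_zero _

theorem qPochhammer_succ (a : R⟦X⟧) (n : ℕ) :
    qPochhammer a (n + 1) = qPochhammer a n * (1 - a * X ^ n) :=
  prod_range_succ _ n

theorem qPochhammer_succ' (a : R⟦X⟧) (n : ℕ) :
    qPochhammer a (n + 1) = (1 - a) * qPochhammer (a * X) n := by
  simp only [qPochhammer, prod_range_succ', pow_succ, pow_zero, mul_one, mul_assoc, mul_comm]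

theorem isUnit_one_sub {b : R⟦X⟧} (hb : X ∣ b) : IsUnit (1 - b) := by
  rw [isUnit_iff_constantCoeff, map_sub, X_dvd_iff.mp hb, map_one, sub_zero]
  exact isUnit_one

theorem isUnit_one_add {b : R⟦X⟧} (hb : X ∣ b) : IsUnit (1 + b) := by
  rw [← sub_neg_eq_add]
  exact isUnit_one_sub hb.neg_right

theorem X_pow_succ_dvd_one_sub_mul_X_pow_sub_one {a : R⟦X⟧} (ha : X ∣ a) (k : ℕ) :
    X ^ (k + 1) ∣ (1 - a * X ^ k) - 1 := by
  rw [sub_sub_cancel_left, pow_succ', dvd_neg]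
  exact mul_dvd_mul ha dvd_rfl

theorem qPochhammerInf_eq_mul {a : R⟦X⟧} (ha : X ∣ a) :
    qPochhammerInf a = (1 - a) * qPochhammerInf (a * X) := by
  rw [qPochhammerInf,
    seriesProd_eq_mul_seriesProd_succ (X_pow_succ_dvd_one_sub_mul_X_pow_sub_one ha)]
  simp only [qPochhammerInf, pow_zero, mul_one, pow_succ, mul_assoc, mul_comm X]

theorem X_pow_dvd_qPochhammerInf_sub_one {a : R⟦X⟧} {n : ℕ} (ha : X ∣ a) (hn : X ^ n ∣ a) :
    X ^ n ∣ qPochhammerInf a - 1 :=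
  X_pow_dvd_seriesProd_sub_one (X_pow_succ_dvd_one_sub_mul_X_pow_sub_one ha) fun k => by
    rw [sub_sub_cancel_left, dvd_neg]
    exact hn.mul_right _

theorem qPochhammer_X (n : ℕ) :
    qPochhammer (X : R⟦X⟧) n = ∏ k ∈ range n, (1 - (X : R⟦X⟧) ^ (k + 1)) := by
  simp only [qPochhammer, ← pow_succ']

theorem qPochhammer_neg_mul_X (a : R⟦X⟧) (n : ℕ) :
    qPochhammer (-(a * X)) n = ∏ j ∈ range n, (1 + a * X ^ (j + 1)) := by
  simp only [qPochhammer, neg_mul, sub_neg_eq_add, mul_assoc, ← pow_succ']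

theorem qPochhammerInf_mul_X_pow (a : R⟦X⟧) (n : ℕ) :
    qPochhammerInf (a * X ^ n) = seriesProd fun k => 1 - a * X ^ (n + k) := by
  simp only [qPochhammerInf, mul_assoc, ← pow_add]

noncomputable def eulerSum (b c : R⟦X⟧) : R⟦X⟧ :=
  seriesSum fun j => b ^ j * Ring.inverse (qPochhammer c j)

theorem X_pow_dvd_pow_mul {b : R⟦X⟧} (hb : X ∣ b) {i j : ℕ} (hij : i ≤ j) (d : R⟦X⟧) :
    X ^ i ∣ b ^ j * d :=
  ((pow_dvd_pow X hij).trans (pow_dvd_pow_of_dvd hb j)).mul_right d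

theorem eulerSum_eq_one_add {b : R⟦X⟧} (hb : X ∣ b) (c : R⟦X⟧) :
    eulerSum b c
      = 1 + seriesSum fun j => b ^ (j + 1) * Ring.inverse (qPochhammer c (j + 1)) := by
  rw [eulerSum, seriesSum_eq_add_seriesSum_succ fun j => X_pow_dvd_pow_mul hb le_rfl _, pow_zero,
    qPochhammer_zero, Ring.inverse_one, mul_one]

theorem one_sub_mul_eulerSum_sub_one {b c : R⟦X⟧} (hb : X ∣ b) (hc : X ∣ c) :
    (1 - c) * (eulerSum b c - 1) = b * eulerSum b (c * X) := by
  rw [eulerSum_eq_one_add hb, add_sub_cancel_left, eulerSum,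
    ← seriesSum_mul_left fun j => X_pow_dvd_pow_mul hb (Nat.le_add_right j 1) _,
    ← seriesSum_mul_left fun j => X_pow_dvd_pow_mul hb le_rfl _]
  congr 1
  funext j
  rw [qPochhammer_succ', Ring.mul_inverse_rev]
  linear_combination (b ^ (j + 1) * Ring.inverse (qPochhammer (c * X) j)) *
    Ring.mul_inverse_cancel _ (isUnit_one_sub hc)

theorem one_sub_mul_eulerSum {b : R⟦X⟧} (hb : X ∣ b) (c : R⟦X⟧) :
    (1 - b) * eulerSum b (c * X) = 1 + c * (eulerSum (b * X) (c * X) - 1) := by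
  have hbX : X ∣ b * X := hb.mul_right X
  have hterm (j : ℕ) : b ^ (j + 1) * Ring.inverse (qPochhammer (c * X) (j + 1))
      - b * (b ^ j * Ring.inverse (qPochhammer (c * X) j))
      = c * ((b * X) ^ (j + 1) * Ring.inverse (qPochhammer (c * X) (j + 1))) := by
    rw [qPochhammer_succ, Ring.mul_inverse_rev]
    linear_combination (b ^ (j + 1) * Ring.inverse (qPochhammer (c * X) j)) *
      Ring.mul_inverse_cancel (1 - c * X * X ^ j)
        (isUnit_one_sub ((dvd_mul_left X c).mul_right _))
  have hb_mul : b * eulerSum b (c * X)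
      = seriesSum fun j => b * (b ^ j * Ring.inverse (qPochhammer (c * X) j)) :=
    (seriesSum_mul_left (fun j => X_pow_dvd_pow_mul hb le_rfl _) b).symm
  calc (1 - b) * eulerSum b (c * X)
      = 1 + seriesSum (fun j => b ^ (j + 1) * Ring.inverse (qPochhammer (c * X) (j + 1))
          - b * (b ^ j * Ring.inverse (qPochhammer (c * X) j))) := by
        rw [seriesSum_sub, ← hb_mul]
        linear_combination eulerSum_eq_one_add hb (c * X)
    _ = 1 + c * (eulerSum (b * X) (c * X) - 1) := by
        rw [funext hterm,
          seriesSum_mul_left fun j => X_pow_dvd_pow_mul hbX (Nat.le_add_right j 1) _,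
          eulerSum_eq_one_add hbX, add_sub_cancel_left]

theorem X_pow_dvd_eulerSum_sub_one {b : R⟦X⟧} {n : ℕ} (hb : X ∣ b) (hn : X ^ n ∣ b) :
    X ^ n ∣ eulerSum b X - 1 := by
  rw [← (isUnit_one_sub (dvd_refl X)).dvd_mul_left, one_sub_mul_eulerSum_sub_one hb dvd_rfl]
  exact hn.mul_right _

theorem qPochhammerInf_mul_eulerSum {b : R⟦X⟧} (hb : X ∣ b) :
    qPochhammerInf b * eulerSum b X = 1 := by
  have hbn (n : ℕ) : X ∣ b * X ^ n := hb.mul_right _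
  have hstep (n : ℕ) : qPochhammerInf (b * X ^ n) * eulerSum (b * X ^ n) X
      = qPochhammerInf (b * X ^ (n + 1)) * eulerSum (b * X ^ (n + 1)) X := by
    have := one_sub_mul_eulerSum (hbn n) 1
    rw [one_mul, one_mul, add_sub_cancel, mul_assoc b, ← pow_succ] at this
    rw [qPochhammerInf_eq_mul (hbn n), mul_assoc b, ← pow_succ, mul_comm (1 - _), mul_assoc, this]
  have hconst (n : ℕ) : qPochhammerInf b * eulerSum b X
      = qPochhammerInf (b * X ^ n) * eulerSum (b * X ^ n) X := by
    induction n with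
    | zero => rw [pow_zero, mul_one]
    | succ n ih => rw [ih, hstep]
  refine eq_of_forall_X_pow_dvd_sub fun n => ?_
  have hQ := X_pow_dvd_qPochhammerInf_sub_one (hbn n) (dvd_mul_left _ b)
  have hE := X_pow_dvd_eulerSum_sub_one (hbn n) (dvd_mul_left _ b)
  rw [hconst n, show ∀ p e : R⟦X⟧, p * e - 1 = (p - 1) * e + (e - 1) by intros; ring]
  exact dvd_add (hQ.mul_right _) hE

noncomputable def durfeeTerm (a : R⟦X⟧) (m : ℕ) : R⟦X⟧ :=
  a ^ m * X ^ (m * m) * qPochhammerInf (a * X ^ (m + 1)) * Ring.inverse (qPochhammer X m)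

/-- `∑_{k ≥ m} durfeeTerm a k`. -/
noncomputable def durfeeTail (a : R⟦X⟧) (m : ℕ) : R⟦X⟧ :=
  a ^ m * X ^ (m * m) * qPochhammerInf (a * X ^ m) * eulerSum (a * X ^ m) (X ^ (m + 1))
    * Ring.inverse (qPochhammer X m)

theorem durfeeTail_sub_succ {a : R⟦X⟧} (ha : X ∣ a) (m : ℕ) :
    durfeeTail a m - durfeeTail a (m + 1) = durfeeTerm a m := by
  have hXm : (X : R⟦X⟧) ∣ X ^ (m + 1) := dvd_pow_self X m.succ_ne_zero
  have hQ : qPochhammerInf (a * X ^ m) = (1 - a * X ^ m) * qPochhammerInf (a * X ^ (m + 1)) := by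
    rw [qPochhammerInf_eq_mul (ha.mul_right _), mul_assoc, ← pow_succ]
  have hS := one_sub_mul_eulerSum (ha.mul_right (X ^ m)) (X ^ m)
  rw [mul_assoc a, ← pow_succ] at hS
  have hS' := one_sub_mul_eulerSum_sub_one (ha.mul_right (X ^ (m + 1))) hXm
  rw [← pow_succ] at hS'
  have hu := Ring.mul_inverse_cancel _ (isUnit_one_sub hXm)
  rw [durfeeTail, durfeeTail, durfeeTerm, hQ, qPochhammer_succ, ← pow_succ', Ring.mul_inverse_rev]
  linear_combination (a ^ m * X ^ (m * m) * qPochhammerInf (a * X ^ (m + 1))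
      * Ring.inverse (qPochhammer X m)) * hS
    + (a ^ m * X ^ (m * m) * X ^ m * qPochhammerInf (a * X ^ (m + 1))
      * Ring.inverse (qPochhammer X m) * Ring.inverse (1 - X ^ (m + 1))) * hS'
    - (a ^ m * X ^ (m * m) * X ^ m * qPochhammerInf (a * X ^ (m + 1))
      * Ring.inverse (qPochhammer X m) * (eulerSum (a * X ^ (m + 1)) (X ^ (m + 1)) - 1)) * hu

theorem durfeeTail_zero {a : R⟦X⟧} (ha : X ∣ a) : durfeeTail a 0 = 1 := by
  simpa [durfeeTail, qPochhammer_zero] using qPochhammerInf_mul_eulerSum ha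

theorem X_pow_dvd_durfeeTail (a : R⟦X⟧) (m : ℕ) : X ^ m ∣ durfeeTail a m := by
  unfold durfeeTail
  exact ((((pow_dvd_pow X (Nat.le_mul_self m)).mul_left _).mul_right _).mul_right _).mul_right _

theorem X_pow_dvd_durfeeTerm (a : R⟦X⟧) (m : ℕ) : X ^ m ∣ durfeeTerm a m := by
  unfold durfeeTerm
  exact (((pow_dvd_pow X (Nat.le_mul_self m)).mul_left _).mul_right _).mul_right _

theorem seriesSum_durfeeTerm {a : R⟦X⟧} (ha : X ∣ a) : seriesSum (durfeeTerm a) = 1 := by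
  rw [← funext (durfeeTail_sub_succ ha), seriesSum_sub_succ (X_pow_dvd_durfeeTail a),
    durfeeTail_zero ha]

/-- At `a = z`, the `m`-th terms of the two sides are `lhsTerm z m` and `rhsTerm z m`
(index `n = m + 1`). -/
noncomputable def lhsTerm (a : R⟦X⟧) (m : ℕ) : R⟦X⟧ :=
  a ^ (m + 1) * X ^ ((m + 1) ^ 2) * qPochhammerInf (a * X ^ (m + 2))
    * Ring.inverse (qPochhammer X m) * Ring.inverse (1 + a * X ^ (m + 1))

noncomputable def rhsTerm (a : R⟦X⟧) (m : ℕ) : R⟦X⟧ :=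
  (-1) ^ m * a ^ (m + 1) * X ^ ((m + 1) * (m + 2) / 2)
    * Ring.inverse (qPochhammer (-(a * X)) (m + 1))

theorem X_pow_dvd_lhsTerm (a : R⟦X⟧) (m : ℕ) : X ^ m ∣ lhsTerm a m := by
  unfold lhsTerm
  exact (((((pow_dvd_pow X (by nlinarith)).mul_left _).mul_right _).mul_right _).mul_right _)

theorem X_pow_dvd_rhsTerm (a : R⟦X⟧) (m : ℕ) : X ^ m ∣ rhsTerm a m := by
  unfold rhsTerm
  have : m ≤ (m + 1) * (m + 2) / 2 := (Nat.le_div_iff_mul_le two_pos).mpr (by nlinarith)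
  exact ((pow_dvd_pow X this).mul_left _).mul_right _

theorem one_add_mul_lhsTerm_zero (a : R⟦X⟧) :
    (1 + a * X) * lhsTerm a 0 = a * X * durfeeTerm (a * X) 0 := by
  have hv := Ring.mul_inverse_cancel _ (isUnit_one_add (dvd_mul_left X a))
  simp only [lhsTerm, durfeeTerm, qPochhammer_zero, Ring.inverse_one, zero_add, pow_one,
    mul_assoc a X, ← sq]
  linear_combination a * X * qPochhammerInf (a * X ^ 2) * hv

theorem one_add_mul_lhsTerm_succ (a : R⟦X⟧) (m : ℕ) :
    (1 + a * X) * lhsTerm a (m + 1)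
      = a * X * durfeeTerm (a * X) (m + 1) - a * X * lhsTerm (a * X) m := by
  have hu := Ring.mul_inverse_cancel (1 - (X : R⟦X⟧) ^ (m + 1))
    (isUnit_one_sub (dvd_pow_self X m.succ_ne_zero))
  have hv := Ring.mul_inverse_cancel (1 + a * X ^ (m + 1 + 1))
    (isUnit_one_add ((dvd_pow_self X (m + 1).succ_ne_zero).mul_left a))
  rw [lhsTerm, lhsTerm, durfeeTerm, qPochhammer_succ, ← pow_succ', Ring.mul_inverse_rev,
    show a * X * X ^ (m + 1 + 1) = a * X ^ (m + 1 + 2) by ring,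
    show a * X * X ^ (m + 1) = a * X ^ (m + 1 + 1) by ring]
  linear_combination
    (a ^ (m + 2) * X ^ ((m + 1) ^ 2 + m + 2) * qPochhammerInf (a * X ^ (m + 1 + 2))
      * Ring.inverse (qPochhammer X m))
    * (Ring.inverse (1 - X ^ (m + 1)) * hv - Ring.inverse (1 + a * X ^ (m + 1 + 1)) * hu)

theorem one_add_mul_rhsTerm_zero (a : R⟦X⟧) : (1 + a * X) * rhsTerm a 0 = a * X := by
  have hv := Ring.mul_inverse_cancel _ (isUnit_one_add (dvd_mul_left X a))
  simp only [rhsTerm, qPochhammer_succ, qPochhammer_zero, pow_zero, zero_add, one_mul, mul_one,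
    pow_one, sub_neg_eq_add, Nat.reduceDiv]
  linear_combination a * X * hv

theorem one_add_mul_rhsTerm_succ (a : R⟦X⟧) (m : ℕ) :
    (1 + a * X) * rhsTerm a (m + 1) = -(a * X) * rhsTerm (a * X) m := by
  have hv := Ring.mul_inverse_cancel _ (isUnit_one_add (dvd_mul_left X a))
  have htri : (m + 1 + 1) * (m + 1 + 2) / 2 = (m + 1) * (m + 2) / 2 + (m + 2) := by
    rw [show (m + 1 + 1) * (m + 1 + 2) = (m + 1) * (m + 2) + 2 * (m + 2) by ring,
      Nat.add_mul_div_left _ _ two_pos]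
  rw [rhsTerm, rhsTerm, qPochhammer_succ', sub_neg_eq_add, neg_mul, Ring.mul_inverse_rev, htri]
  linear_combination (-1) ^ (m + 1) * a ^ (m + 2) * X ^ ((m + 1) * (m + 2) / 2 + (m + 2))
    * Ring.inverse (qPochhammer (-(a * X * X)) (m + 1)) * hv

theorem lhsTerm_functional_eq (a : R⟦X⟧) :
    (1 + a * X) * seriesSum (lhsTerm a) + a * X * seriesSum (lhsTerm (a * X)) = a * X := by
  have hD := seriesSum_durfeeTerm (dvd_mul_left X a)
  rw [seriesSum_eq_add_seriesSum_succ (X_pow_dvd_durfeeTerm _)] at hD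
  rw [← seriesSum_mul_left (X_pow_dvd_lhsTerm a),
    seriesSum_eq_add_seriesSum_succ fun m => (X_pow_dvd_lhsTerm a m).mul_left _,
    one_add_mul_lhsTerm_zero, funext (one_add_mul_lhsTerm_succ a), seriesSum_sub,
    seriesSum_mul_left fun m => (pow_dvd_pow X m.le_succ).trans (X_pow_dvd_durfeeTerm _ _),
    seriesSum_mul_left (X_pow_dvd_lhsTerm _)]
  linear_combination a * X * hD

theorem rhsTerm_functional_eq (a : R⟦X⟧) :
    (1 + a * X) * seriesSum (rhsTerm a) + a * X * seriesSum (rhsTerm (a * X)) = a * X := by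
  rw [← seriesSum_mul_left (X_pow_dvd_rhsTerm a),
    seriesSum_eq_add_seriesSum_succ fun m => (X_pow_dvd_rhsTerm a m).mul_left _,
    one_add_mul_rhsTerm_zero, funext (one_add_mul_rhsTerm_succ a),
    seriesSum_mul_left (X_pow_dvd_rhsTerm _)]
  ring

theorem seriesSum_lhsTerm_eq_seriesSum_rhsTerm (a : R⟦X⟧) :
    seriesSum (lhsTerm a) = seriesSum (rhsTerm a) := by
  refine sub_eq_zero.mp (eq_zero_of_forall_eq_X_mul
    (u := fun b => seriesSum (lhsTerm b) - seriesSum (rhsTerm b))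
    (fun b => ⟨-b * Ring.inverse (1 + b * X), ?_⟩) a)
  have hv := Ring.mul_inverse_cancel _ (isUnit_one_add (dvd_mul_left X b))
  linear_combination
    Ring.inverse (1 + b * X) * (lhsTerm_functional_eq b - rhsTerm_functional_eq b)
      - (seriesSum (lhsTerm b) - seriesSum (rhsTerm b)) * hv

end QSeries

/-- Identity (2.3). -/
theorem stmt3 :
    seriesSum (fun m =>
      zz ^ (m + 1) * (X : PowerSeries (Polynomial ℚ)) ^ ((m + 1) ^ 2)
        * seriesProd (fun k => 1 - zz * X ^ (m + 1 + 1 + k))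
        * Ring.inverse (∏ k ∈ Finset.range (m + 1 - 1), (1 - (X : PowerSeries (Polynomial ℚ)) ^ (k + 1)))
        * Ring.inverse (1 + zz * X ^ (m + 1))) =
    seriesSum (fun m =>
      (-1 : PowerSeries (Polynomial ℚ)) ^ (m + 1 - 1) * zz ^ (m + 1)
        * X ^ ((m + 1) * (m + 1 + 1) / 2)
        * Ring.inverse (∏ j ∈ Finset.range (m + 1), (1 + zz * X ^ (j + 1)))) := by
  convert QSeries.seriesSum_lhsTerm_eq_seriesSum_rhsTerm zz using 2 <;> funext m
  · simp only [QSeries.lhsTerm, QSeries.qPochhammerInf_mul_X_pow, QSeries.qPochhammer_X,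
      add_tsub_cancel_right]
  · simp only [QSeries.rhsTerm, QSeries.qPochhammer_neg_mul_X, add_tsub_cancel_right]
end

section
/- For every integer n ≥ 1, the coefficient of q^n in the formal power series (−q;q)_∞ · (1 − φ(−q)), where φ(−q) = ∑_{m=0}^∞ (−1)^m q^{m²} · (∏_{j=1}^{m}(1+q^{2j}))^{−1}, equals D_{o,e}(n) + D_{o,o}(n) + D_{e,e}(n) − D_{e,o}(n). -/
open PowerSeries

/-- The number of partitions of `n` into an even number of distinct parts whose
smallest part is even. -/
noncomputable def Dee (n : ℕ) : ℕ :=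
  Nat.card {l : n.Partition // l.parts.Nodup ∧ Even (Multiset.card l.parts) ∧
    Even (sInf {k : ℕ | k ∈ l.parts})}

/-- The number of partitions of `n` into an even number of distinct parts whose
smallest part is odd. -/
noncomputable def Deo (n : ℕ) : ℕ :=
  Nat.card {l : n.Partition // l.parts.Nodup ∧ Even (Multiset.card l.parts) ∧
    Odd (sInf {k : ℕ | k ∈ l.parts})}

/-- The number of partitions of `n` into an odd number of distinct parts whose
smallest part is even. -/
noncomputable def Doe (n : ℕ) : ℕ :=
  Nat.card {l : n.Partition // l.parts.Nodup ∧ Odd (Multiset.card l.parts) ∧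
    Even (sInf {k : ℕ | k ∈ l.parts})}

/-- The number of partitions of `n` into an odd number of distinct parts whose
smallest part is odd. -/
noncomputable def Doo (n : ℕ) : ℕ :=
  Nat.card {l : n.Partition // l.parts.Nodup ∧ Odd (Multiset.card l.parts) ∧
    Odd (sInf {k : ℕ | k ∈ l.parts})}

/-- The mock theta function `φ(-q)`. -/
noncomputable def phiNeg : PowerSeries ℚ :=
  seriesSum fun m =>
    (-1 : PowerSeries ℚ) ^ m * X ^ (m ^ 2)
      * Ring.inverse (∏ j ∈ Finset.range m, (1 + X ^ (2 * (j + 1))))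

/-!
Work modulo `X ^ (n + 1)`. In a commutative ring where `q ^ N = 0`, the finite `q`-Pochhammer
symbol `(a; q)_N = ∏_{k < N} (1 - a q^k)` satisfies `(a; q)_N = (1 - a) (a q; q)_N` exactly, so
it behaves like `(a; q)_∞` and the usual manipulations of infinite products become finite ring
identities.

Put `F t = ∑_m (-1)^m q^{m²} (a q^{2m+2t+1}; q²)_∞`. Shifting `m` gives the functional equation
`(1 - a q^{2t}) F t = F (t + 1) - a q^{2t} (a q^{2t+1}; q²)_∞`, and telescoping it against
`(a q^{2t}; q²)_∞` evaluates `(a; q²)_∞ F 0`. For `a = -q` this is `(-q; q)_∞ φ(-q)`; for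
`a = 1` the factor `(1; q²)_∞` vanishes, which expresses the partial theta series
`∑ (-1)^m q^{m²}`. Expanding `(∓q; q)_∞` by the smallest factor chosen then gives
`(-q; q)_∞ (1 - φ(-q)) = ∑_{b ≥ 1} q^b ((-1)^{b+1} q^{b+1}; q)_∞`.
The `q^n` coefficient of the right side counts each partition of `n` into distinct parts with
smallest part `b` with weight `((-1)^b)^{#parts - 1}`. This is `1` when `b` is even and
`(-1)^{#parts - 1}` when `b` is odd.
-/

open Finset

def qPochhammer {R : Type*} [CommRing R] (a q : R) (n : ℕ) : R :=
  ∏ k ∈ range n, (1 - a * q ^ k)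

lemma sum_range_two_mul {M : Type*} [AddCommMonoid M] (f : ℕ → M) (n : ℕ) :
    ∑ k ∈ range (2 * n), f k = ∑ j ∈ range n, (f (2 * j) + f (2 * j + 1)) := by
  induction n with
  | zero => simp
  | succ n ih => rw [show 2 * (n + 1) = 2 * n + 1 + 1 by ring, sum_range_succ, sum_range_succ,
      ih, sum_range_succ, add_assoc]

section qPochhammer

variable {R : Type*} [CommRing R]

section General

variable (a q : R)

@[simp]
lemma qPochhammer_zero : qPochhammer a q 0 = 1 := prod_range_zero _

@[simp]
lemma qPochhammer_zero_left (n : ℕ) : qPochhammer 0 q n = 1 := by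
  simp [qPochhammer]

lemma qPochhammer_succ (n : ℕ) :
    qPochhammer a q (n + 1) = (1 - a) * qPochhammer (a * q) q n := by
  rw [qPochhammer, prod_range_succ', pow_zero, mul_one, mul_comm]
  simp only [qPochhammer, pow_succ, mul_assoc, mul_comm q]

lemma qPochhammer_add (m n : ℕ) :
    qPochhammer a q (m + n) = qPochhammer a q m * qPochhammer (a * q ^ m) q n := by
  simp only [qPochhammer, prod_range_add, pow_add, mul_assoc]

lemma qPochhammer_two_mul (n : ℕ) :
    qPochhammer a q (2 * n) = qPochhammer a (q ^ 2) n * qPochhammer (a * q) (q ^ 2) n := by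
  induction n with
  | zero => simp
  | succ n ih =>
    rw [show 2 * (n + 1) = 2 * n + 1 + 1 by ring]
    simp only [qPochhammer, prod_range_succ] at ih ⊢
    rw [ih]
    ring

lemma map_qPochhammer {S : Type*} [CommRing S] (f : R →+* S) (n : ℕ) :
    f (qPochhammer a q n) = qPochhammer (f a) (f q) n := by
  simp [qPochhammer, map_prod]

end General

section Nilpotent

variable {q : R} {N : ℕ} (hq : q ^ N = 0)
include hq

lemma qPochhammer_eq_of_le (a : R) {M : ℕ} (hM : N ≤ M) :
    qPochhammer a q M = qPochhammer a q N := by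
  obtain ⟨k, rfl⟩ := Nat.exists_eq_add_of_le hM
  simp [qPochhammer_add, hq]

lemma qPochhammer_mul_qPochhammer (a : R) (m : ℕ) :
    qPochhammer a q m * qPochhammer (a * q ^ m) q N = qPochhammer a q N := by
  rw [← qPochhammer_add, qPochhammer_eq_of_le hq a (Nat.le_add_left N m)]

lemma qPochhammer_eq_one_sub_mul (a : R) :
    qPochhammer a q N = (1 - a) * qPochhammer (a * q) q N := by
  simpa [qPochhammer_succ] using (qPochhammer_mul_qPochhammer hq a 1).symm

lemma qPochhammer_sq_mul_qPochhammer_sq (a : R) :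
    qPochhammer a (q ^ 2) N * qPochhammer (a * q) (q ^ 2) N = qPochhammer a q N := by
  rw [← qPochhammer_two_mul, qPochhammer_eq_of_le hq a (by omega)]

lemma qPochhammer_one : qPochhammer 1 q N = 0 := by
  cases N with
  | zero => simpa using hq
  | succ N => simp [qPochhammer_succ]

lemma qPochhammer_eq_one_sub_mul_sum (a : R) {M : ℕ} (hM : N ≤ M) :
    qPochhammer a q N = 1 - a * ∑ c ∈ range M, q ^ c * qPochhammer (a * q ^ (c + 1)) q N := by
  set E : ℕ → R := fun c => qPochhammer (a * q ^ c) q N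
  have hstep (c : ℕ) : E (c + 1) - E c = a * (q ^ c * E (c + 1)) := by
    simp only [E, qPochhammer_eq_one_sub_mul hq (a * q ^ c), pow_succ, mul_assoc]
    ring
  have htop : E M = 1 := by simp [E, pow_eq_zero_of_le hM hq]
  have := sum_range_sub E M
  simp only [hstep, htop, E, pow_zero, mul_one] at this
  rw [mul_sum]
  linear_combination this

lemma one_sub_mul_sum_neg_one_pow_mul (a : R) (T : ℕ → R)
    (hT : ∀ m, T m = (1 - a * q ^ (2 * m + 1)) * T (m + 1)) (t : ℕ) :
    (1 - a * q ^ (2 * t)) * ∑ m ∈ range N, (-1) ^ m * q ^ (m ^ 2) * T (m + t) =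
      ∑ m ∈ range N, (-1) ^ m * q ^ (m ^ 2) * T (m + (t + 1)) - a * q ^ (2 * t) * T t := by
  set u : ℕ → R := fun m => (-1) ^ m * q ^ (m ^ 2) * T (m + t)
  have hshift : ∑ m ∈ range N, u (m + 1) = ∑ m ∈ range N, u m - T t := by
    have h1 := sum_range_succ' u N
    have h2 := sum_range_succ u N
    have hlast : u N = 0 := by simp [u, pow_eq_zero_of_le (Nat.le_self_pow two_ne_zero N) hq]
    simp only [u, pow_zero, zero_add, one_mul] at h1
    rw [hlast] at h2
    linear_combination h1.symm.trans h2
  -- `q^{m²} · a q^{2(m+t)+1} = a q^{2t} · q^{(m+1)²}`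
  have hsplit : ∑ m ∈ range N, u m =
      ∑ m ∈ range N, (-1) ^ m * q ^ (m ^ 2) * T (m + (t + 1)) +
        a * q ^ (2 * t) * ∑ m ∈ range N, u (m + 1) := by
    simp only [u, mul_sum, ← sum_add_distrib]
    refine sum_congr rfl fun m _ => ?_
    rw [hT (m + t)]
    ring_nf
  rw [hshift] at hsplit
  linear_combination hsplit

theorem qPochhammer_sq_mul_sum_neg_one_pow_mul (a : R) :
    qPochhammer a (q ^ 2) N *
        ∑ m ∈ range N, (-1) ^ m * q ^ (m ^ 2) * qPochhammer (a * q ^ (2 * m + 1)) (q ^ 2) N =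
      ∑ m ∈ range N, (-1) ^ m * q ^ (m ^ 2) -
        a * ∑ t ∈ range N, q ^ (2 * t) * qPochhammer (a * q ^ (2 * t + 1)) q N := by
  have hq2 : (q ^ 2) ^ N = 0 := by rw [← pow_mul, pow_eq_zero_of_le (by omega) hq]
  have hzero {e : ℕ} (he : N ≤ e) : a * q ^ e = 0 := by rw [pow_eq_zero_of_le he hq, mul_zero]
  set T : ℕ → R := fun m => qPochhammer (a * q ^ (2 * m + 1)) (q ^ 2) N
  set P : ℕ → R := fun t => qPochhammer (a * q ^ (2 * t)) (q ^ 2) N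
  set F : ℕ → R := fun t => ∑ m ∈ range N, (-1) ^ m * q ^ (m ^ 2) * T (m + t)
  have hT (m : ℕ) : T m = (1 - a * q ^ (2 * m + 1)) * T (m + 1) := by
    simp only [T, qPochhammer_eq_one_sub_mul hq2 (a * q ^ (2 * m + 1))]
    ring_nf
  have hP (t : ℕ) : P t = (1 - a * q ^ (2 * t)) * P (t + 1) := by
    simp only [P, qPochhammer_eq_one_sub_mul hq2 (a * q ^ (2 * t))]
    ring_nf
  have hstep (t : ℕ) : P (t + 1) * F (t + 1) - P t * F t =
      a * (q ^ (2 * t) * (P (t + 1) * T t)) := by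
    rw [hP t]
    linear_combination -P (t + 1) * one_sub_mul_sum_neg_one_pow_mul hq a T hT t
  have hPT (t : ℕ) : P (t + 1) * T t = qPochhammer (a * q ^ (2 * t + 1)) q N := by
    rw [← qPochhammer_sq_mul_qPochhammer_sq hq, mul_comm]
    simp only [T, P]
    ring_nf
  have htop : P N * F N = ∑ m ∈ range N, (-1) ^ m * q ^ (m ^ 2) := by
    simp only [P, F, T, hzero (show N ≤ 2 * N by omega), qPochhammer_zero_left, one_mul]
    refine sum_congr rfl fun m _ => ?_
    rw [hzero (by omega), qPochhammer_zero_left, mul_one]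
  have := sum_range_sub (fun t => P t * F t) N
  simp only [hstep, hPT, ← mul_sum, htop, P, F, T, pow_zero, mul_zero, add_zero, mul_one] at this
  linear_combination this

lemma sum_neg_one_pow_mul_pow_sq :
    ∑ m ∈ range N, (-1) ^ m * q ^ (m ^ 2) =
      qPochhammer q q N + ∑ t ∈ range N, q ^ (2 * t + 2) * qPochhammer (q ^ (2 * t + 3)) q N := by
  have hq2 : (q ^ 2) ^ N = 0 := by rw [← pow_mul, pow_eq_zero_of_le (by omega) hq]
  set g : ℕ → R := fun t => q ^ (2 * t) * qPochhammer (q ^ (2 * t + 1)) q N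
  have hlast : g N = 0 := by
    simp only [g]
    rw [pow_eq_zero_of_le (show N ≤ 2 * N by omega) hq, zero_mul]
  have h := qPochhammer_sq_mul_sum_neg_one_pow_mul hq (1 : R)
  simp only [qPochhammer_one hq2, zero_mul, one_mul] at h
  rw [sub_eq_zero.1 h.symm, ← add_zero (∑ t ∈ range N, g t), ← hlast, ← sum_range_succ, sum_range_succ', add_comm]
  refine congrArg₂ (· + ·) (by simp [g]) (sum_congr rfl fun t _ => ?_)
  simp only [g]
  ring_nf

theorem qPochhammer_neg_sub_mul_sum_neg_one_pow_mul :
    qPochhammer (-q) q N - qPochhammer (-q) (q ^ 2) N *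
        ∑ m ∈ range N, (-1) ^ m * q ^ (m ^ 2) * qPochhammer (-q * q ^ (2 * m + 1)) (q ^ 2) N =
      ∑ c ∈ range (2 * N), q ^ (c + 1) * qPochhammer ((-1) ^ c * q ^ (c + 2)) q N := by
  set f : R → ℕ → R := fun z c => q ^ (c + 1) * qPochhammer (z * q ^ (c + 2)) q N
  have hsplit (z : R) : ∑ c ∈ range (2 * N), f z c =
      ∑ u ∈ range N, f z (2 * u) + ∑ u ∈ range N, f z (2 * u + 1) := by
    rw [sum_range_two_mul, sum_add_distrib]
  have hprod (z : R) : qPochhammer (z * q) q N = 1 - z * ∑ c ∈ range (2 * N), f z c := by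
    rw [qPochhammer_eq_one_sub_mul_sum hq (z * q) (show N ≤ 2 * N by omega), mul_sum, mul_sum]
    refine congrArg _ (sum_congr rfl fun c _ => ?_)
    rw [show z * q * q ^ (c + 1) = z * q ^ (c + 2) by ring]
    ring
  have hneg : qPochhammer (-q) (q ^ 2) N *
      ∑ m ∈ range N, (-1) ^ m * q ^ (m ^ 2) * qPochhammer (-q * q ^ (2 * m + 1)) (q ^ 2) N =
      ∑ m ∈ range N, (-1) ^ m * q ^ (m ^ 2) + ∑ u ∈ range N, f (-1) (2 * u) := by
    rw [qPochhammer_sq_mul_sum_neg_one_pow_mul hq, mul_sum, sub_eq_add_neg, ← sum_neg_distrib]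
    refine congrArg _ (sum_congr rfl fun u _ => ?_)
    rw [show -q * q ^ (2 * u + 1) = -1 * q ^ (2 * u + 2) by ring]
    ring
  have htheta : ∑ m ∈ range N, (-1) ^ m * q ^ (m ^ 2) =
      qPochhammer (1 * q) q N + ∑ u ∈ range N, f 1 (2 * u + 1) := by
    rw [sum_neg_one_pow_mul_pow_sq hq, one_mul]
    simp only [f, one_mul]
  have htarget : ∑ c ∈ range (2 * N), q ^ (c + 1) * qPochhammer ((-1) ^ c * q ^ (c + 2)) q N =
      ∑ u ∈ range N, f 1 (2 * u) + ∑ u ∈ range N, f (-1) (2 * u + 1) := by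
    rw [sum_range_two_mul, sum_add_distrib]
    simp [f, pow_succ, pow_mul]
  have h3 := hprod (-1)
  have h4 := hprod 1
  rw [neg_one_mul] at h3
  rw [hsplit] at h3 h4
  rw [hneg, htheta, htarget]
  linear_combination h3 - h4

end Nilpotent

end qPochhammer

section PowerSeries

variable {S : Type*} [CommRing S]

lemma mk_span_X_pow_eq_mk_iff {N : ℕ} {f g : S⟦X⟧} :
    Ideal.Quotient.mk (Ideal.span {X ^ N}) f = Ideal.Quotient.mk (Ideal.span {X ^ N}) g ↔
      ∀ i < N, coeff i f = coeff i g := by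
  simp [Ideal.Quotient.eq, Ideal.mem_span_singleton, X_pow_dvd_iff, sub_eq_zero]

lemma coeff_seriesProd {f : ℕ → S⟦X⟧} (hf : ∀ k, X ^ (k + 1) ∣ f k - 1) {i M : ℕ} (hi : i < M) :
    coeff i (seriesProd f) = coeff i (∏ k ∈ range M, f k) := by
  rw [seriesProd, coeff_mk]
  refine mk_span_X_pow_eq_mk_iff.1 ?_ i (lt_add_one i)
  have htail : ∏ k ∈ Ico (i + 1) M, Ideal.Quotient.mk (Ideal.span {X ^ (i + 1)}) (f k) = 1 := by
    refine prod_eq_one fun k hk => ?_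
    rw [← map_one (Ideal.Quotient.mk _), Ideal.Quotient.eq, Ideal.mem_span_singleton]
    exact (pow_dvd_pow X (by simp at hk; omega)).trans (hf k)
  rw [← prod_range_mul_prod_Ico f (show i + 1 ≤ M from hi), map_mul, map_prod _ _ (Ico _ _), htail,
    mul_one]

lemma coeff_seriesSum {f : ℕ → S⟦X⟧} (hf : ∀ m, X ^ m ∣ f m) {i M : ℕ} (hi : i < M) :
    coeff i (seriesSum f) = coeff i (∑ m ∈ range M, f m) := by
  rw [seriesSum, coeff_mk, map_sum]
  refine sum_subset (range_subset_range.2 hi) fun m _ hm => X_pow_dvd_iff.1 (hf m) i ?_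
  simpa using hm

end PowerSeries

lemma qPochhammer_neg_mul_map_inverse {S Q : Type*} [CommRing S] [CommRing Q] (π : S⟦X⟧ →+* Q)
    {N : ℕ} (hq : π X ^ N = 0) (m : ℕ) :
    qPochhammer (-π X) (π X) N * π (Ring.inverse (∏ j ∈ range m, (1 + X ^ (2 * (j + 1))))) =
      qPochhammer (-π X) (π X ^ 2) N *
        qPochhammer (-π X * π X ^ (2 * m + 1)) (π X ^ 2) N := by
  set q := π X
  set J : S⟦X⟧ := ∏ j ∈ range m, (1 + X ^ (2 * (j + 1)))
  have hq2 : (q ^ 2) ^ N = 0 := by rw [← pow_mul, pow_eq_zero_of_le (by omega) hq]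
  have hJ : IsUnit J := by simp [J, isUnit_iff_constantCoeff]
  have hJq : π J = qPochhammer (-q * q) (q ^ 2) m := by
    simp only [J, map_prod, qPochhammer]
    refine prod_congr rfl fun j _ => ?_
    simp only [q, map_add, map_one, map_pow]
    ring
  have hcancel : π J * π (Ring.inverse J) = 1 := by
    rw [← map_mul, Ring.mul_inverse_cancel _ hJ, map_one]
  rw [← qPochhammer_sq_mul_qPochhammer_sq hq, ← qPochhammer_mul_qPochhammer hq2 (-q * q) m,
    ← hJq, show -q * q * (q ^ 2) ^ m = -q * q ^ (2 * m + 1) by ring]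
  linear_combination (qPochhammer (-q) (q ^ 2) N *
    qPochhammer (-q * q ^ (2 * m + 1)) (q ^ 2) N) * hcancel

theorem mk_seriesProd_mul_one_sub_phiNeg (N : ℕ) :
    Ideal.Quotient.mk (Ideal.span {X ^ N}) (seriesProd (fun k => 1 + X ^ (k + 1)) * (1 - phiNeg)) =
      Ideal.Quotient.mk (Ideal.span {X ^ N})
        (∑ c ∈ range (2 * N), X ^ (c + 1) * qPochhammer ((-1) ^ c * X ^ (c + 2)) X N) := by
  set π := Ideal.Quotient.mk (Ideal.span {(X : ℚ⟦X⟧) ^ N})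
  set q := π X
  have hq : q ^ N = 0 := by
    rw [← map_pow, Ideal.Quotient.eq_zero_iff_mem, Ideal.mem_span_singleton]
  have hprod : π (seriesProd (fun k => 1 + X ^ (k + 1))) = qPochhammer (-q) q N := by
    rw [mk_span_X_pow_eq_mk_iff.2 fun i hi => coeff_seriesProd (by simp) hi, map_prod,
      qPochhammer]
    refine prod_congr rfl fun k _ => ?_
    simp only [q, map_add, map_one, map_pow]
    ring
  have hphi : π phiNeg = ∑ m ∈ range N, (-1) ^ m * q ^ (m ^ 2) *
      π (Ring.inverse (∏ j ∈ range m, (1 + X ^ (2 * (j + 1))))) := by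
    rw [phiNeg, mk_span_X_pow_eq_mk_iff.2 fun i hi => coeff_seriesSum ?_ hi]
    · simp [π, q]
    · intro m
      exact (pow_dvd_pow X (Nat.le_self_pow two_ne_zero m)).trans
        ((dvd_mul_left _ _).mul_right _)
  have hrhs : π (∑ c ∈ range (2 * N), X ^ (c + 1) * qPochhammer ((-1) ^ c * X ^ (c + 2)) X N) =
      ∑ c ∈ range (2 * N), q ^ (c + 1) * qPochhammer ((-1) ^ c * q ^ (c + 2)) q N := by
    simp [q, map_qPochhammer]
  have hinv (m : ℕ) : qPochhammer (-q) q N *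
      π (Ring.inverse (∏ j ∈ range m, (1 + X ^ (2 * (j + 1))))) =
      qPochhammer (-q) (q ^ 2) N * qPochhammer (-q * q ^ (2 * m + 1)) (q ^ 2) N :=
    qPochhammer_neg_mul_map_inverse π hq m
  rw [map_mul, map_sub, map_one, hprod, hphi, hrhs,
    ← qPochhammer_neg_sub_mul_sum_neg_one_pow_mul hq, mul_sub, mul_one, mul_sum, mul_sum]
  simp only [mul_left_comm (qPochhammer (-q) q N), hinv]
  exact congrArg _ (sum_congr rfl fun m _ => by ring)

def distinctPartitions (n : ℕ) : Finset (Finset ℕ) :=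
  (Icc 1 n).powerset.filter fun B => B.sum id = n

section DistinctPartitions

variable {n : ℕ} {B : Finset ℕ}

lemma mem_distinctPartitions : B ∈ distinctPartitions n ↔ 0 ∉ B ∧ B.sum id = n := by
  simp only [distinctPartitions, mem_filter, mem_powerset]
  refine ⟨fun ⟨hB, hsum⟩ => ⟨fun h0 => by simpa using hB h0, hsum⟩, fun ⟨h0, hsum⟩ => ⟨?_, hsum⟩⟩
  intro k hk
  have : k ≤ B.sum id := single_le_sum (f := id) (fun _ _ => Nat.zero_le _) hk
  rw [mem_Icc]
  exact ⟨Nat.pos_of_ne_zero (ne_of_mem_of_not_mem hk h0), hsum ▸ this⟩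

lemma subset_Icc_of_mem_distinctPartitions (hB : B ∈ distinctPartitions n) : B ⊆ Icc 1 n :=
  mem_powerset.1 (mem_filter.1 hB).1

lemma mem_of_sInf_eq {b : ℕ} (hB : sInf {k | k ∈ B} = b) (hb : 0 < b) : b ∈ B := by
  rcases B.eq_empty_or_nonempty with rfl | hne
  · simp at hB
    omega
  · exact hB ▸ Nat.sInf_mem (coe_nonempty.2 hne)

lemma sInf_mem_of_mem_distinctPartitions (hn : 1 ≤ n) (hB : B ∈ distinctPartitions n) :
    sInf {k | k ∈ B} ∈ B := by
  refine Nat.sInf_mem (B.nonempty_iff_ne_empty.2 ?_)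
  rintro rfl
  simp [mem_distinctPartitions] at hB
  omega

end DistinctPartitions

section Coefficients

variable {S : Type*} [CommRing S]

lemma coeff_X_pow_mul_prod_one_add (s : Finset ℕ) (z : S) (b n : ℕ) :
    coeff n (X ^ b * ∏ k ∈ s, (1 + C z * X ^ k)) =
      ∑ A ∈ s.powerset with b + A.sum id = n, z ^ #A := by
  rw [prod_one_add, mul_sum, map_sum, sum_filter]
  refine sum_congr rfl fun A _ => ?_
  rw [prod_mul_distrib, prod_const, prod_pow_eq_pow_sum, ← map_pow, mul_left_comm, ← pow_add,
    coeff_C_mul_X_pow]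
  simp only [id, eq_comm]

lemma coeff_X_pow_mul_qPochhammer {b L n : ℕ} (hb : 0 < b) (hL : n < b + 1 + L) (a : S) :
    coeff n (X ^ b * qPochhammer (C a * X ^ (b + 1)) X L) =
      ∑ B ∈ distinctPartitions n with sInf {k | k ∈ B} = b, (-a) ^ (#B - 1) := by
  have hprod : qPochhammer (C a * X ^ (b + 1)) X L =
      ∏ k ∈ Ico (b + 1) (b + 1 + L), (1 + C (-a) * X ^ k) := by
    rw [prod_Ico_eq_prod_range, Nat.add_sub_cancel_left, qPochhammer]
    refine prod_congr rfl fun k _ => ?_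
    rw [map_neg, pow_add]
    ring
  rw [hprod, coeff_X_pow_mul_prod_one_add]
  have hbA {A : Finset ℕ} (hA : A ⊆ Ico (b + 1) (b + 1 + L)) : b ∉ A := fun h => by
    simpa using hA h
  refine sum_nbij' (insert b) (fun B => B.erase b) ?_ ?_
    (fun A hA => erase_insert (hbA (mem_powerset.1 (mem_filter.1 hA).1))) ?_ ?_
  · intro A hA
    simp only [mem_filter, mem_powerset] at hA ⊢
    obtain ⟨hsub, hsum⟩ := hA
    refine ⟨mem_distinctPartitions.2 ⟨?_, ?_⟩, ?_⟩
    · simp only [mem_insert, not_or]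
      exact ⟨hb.ne, fun h => by simpa using hsub h⟩
    · rw [sum_insert (hbA hsub), id, hsum]
    · refine IsLeast.csInf_eq ⟨mem_insert_self b A, fun k hk => ?_⟩
      rcases mem_insert.1 hk with rfl | hk
      · exact le_rfl
      · exact Nat.le_of_succ_le (mem_Ico.1 (hsub hk)).1
  · intro B hB
    obtain ⟨hB, hmin⟩ := mem_filter.1 hB
    simp only [mem_filter, mem_powerset]
    refine ⟨fun k hk => ?_, ?_⟩
    · obtain ⟨hkb, hkB⟩ := mem_erase.1 hk
      have h1 : b ≤ k := hmin ▸ Nat.sInf_le hkB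
      have h2 := (mem_Icc.1 (subset_Icc_of_mem_distinctPartitions hB hkB)).2
      rw [mem_Ico]
      omega
    · rw [← (mem_distinctPartitions.1 hB).2, ← add_sum_erase _ _ (mem_of_sInf_eq hmin hb), id]
  · intro B hB
    exact insert_erase (mem_of_sInf_eq (mem_filter.1 hB).2 hb)
  · intro A hA
    rw [card_insert_of_notMem (hbA (mem_powerset.1 (mem_filter.1 hA).1)), Nat.add_sub_cancel]

lemma coeff_sum_X_pow_mul_qPochhammer {n : ℕ} (hn : 1 ≤ n) :
    coeff n (∑ c ∈ range (2 * (n + 1)),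
        X ^ (c + 1) * qPochhammer ((-1) ^ c * X ^ (c + 2)) X (n + 1) : ℚ⟦X⟧) =
      ∑ B ∈ distinctPartitions n, ((-1 : ℚ) ^ sInf {k | k ∈ B}) ^ (#B - 1) := by
  have hmin {B : Finset ℕ} (hB : B ∈ distinctPartitions n) : sInf {k | k ∈ B} ∈ Icc 1 n :=
    subset_Icc_of_mem_distinctPartitions hB (sInf_mem_of_mem_distinctPartitions hn hB)
  rw [map_sum, ← sum_fiberwise_of_maps_to (s := distinctPartitions n)
    (g := fun B => sInf {k | k ∈ B} - 1)
    (t := range (2 * (n + 1))) fun B hB => mem_range.2 (by have := mem_Icc.1 (hmin hB); omega)]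
  refine sum_congr rfl fun c _ => ?_
  rw [show ((-1 : ℚ⟦X⟧) ^ c) = C ((-1) ^ c) by simp,
    coeff_X_pow_mul_qPochhammer (Nat.succ_pos c) (by omega)]
  refine sum_congr (filter_congr fun B hB => ?_) fun B hB => ?_
  · have := mem_Icc.1 (hmin hB)
    omega
  · obtain ⟨hB, hc⟩ := mem_filter.1 hB
    have := mem_Icc.1 (hmin hB)
    rw [show sInf {k | k ∈ B} = c + 1 by omega, pow_succ, mul_neg_one]

end Coefficients

section Counting

variable {n : ℕ}

lemma card_partition_nodup_eq_card_filter (P Q : ℕ → Prop) [DecidablePred P] [DecidablePred Q] :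
    Nat.card {l : n.Partition // l.parts.Nodup ∧ P (Multiset.card l.parts) ∧
      Q (sInf {k | k ∈ l.parts})} = #{B ∈ distinctPartitions n | P #B ∧ Q (sInf {k | k ∈ B})} := by
  rw [← Nat.card_eq_finsetCard]
  exact Nat.card_congr
    { toFun := fun l => ⟨⟨l.1.parts, l.2.1⟩, mem_filter.2 ⟨mem_distinctPartitions.2
        ⟨fun h0 => lt_irrefl 0 (l.1.parts_pos h0), by
          rw [sum_eq_multiset_sum, Multiset.map_id]; exact l.1.parts_sum⟩,
        l.2.2⟩⟩
      invFun := fun B => ⟨⟨B.1.val,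
        fun hi => Nat.pos_of_ne_zero (ne_of_mem_of_not_mem hi
          (mem_distinctPartitions.1 (mem_filter.1 B.2).1).1),
        by
          have h := (mem_distinctPartitions.1 (mem_filter.1 B.2).1).2
          rwa [sum_eq_multiset_sum, Multiset.map_id] at h⟩,
        B.1.nodup, (mem_filter.1 B.2).2⟩
      left_inv := fun _ => rfl
      right_inv := fun _ => rfl }

lemma sum_distinctPartitions_neg_one_pow (hn : 1 ≤ n) :
    ∑ B ∈ distinctPartitions n, ((-1 : ℚ) ^ sInf {k | k ∈ B}) ^ (#B - 1) =
      (Doe n : ℚ) + Doo n + Dee n - Deo n := by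
  simp only [Doe, Doo, Dee, Deo, card_partition_nodup_eq_card_filter, ← sum_boole,
    ← sum_add_distrib, ← sum_sub_distrib]
  refine sum_congr rfl fun B hB => ?_
  obtain ⟨c, hc⟩ : ∃ c, #B = c + 1 :=
    ⟨#B - 1, (Nat.sub_add_cancel (card_pos.2 ⟨_, sInf_mem_of_mem_distinctPartitions hn hB⟩)).symm⟩
  rw [hc, Nat.add_sub_cancel]
  generalize sInf {k | k ∈ B} = m
  rcases Nat.even_or_odd m with hm | hm <;> rcases Nat.even_or_odd c with hc | hc <;>
    simp [hm, hc, Nat.not_even_iff_odd.2, Nat.not_odd_iff_even.2]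

end Counting

/-- Identity (2.8). -/
theorem stmt4 (n : ℕ) (hn : 1 ≤ n) :
    PowerSeries.coeff n (seriesProd (fun k => 1 + X ^ (k + 1)) * (1 - phiNeg)) =
      (Doe n : ℚ) + (Doo n : ℚ) + (Dee n : ℚ) - (Deo n : ℚ) := by
  rw [mk_span_X_pow_eq_mk_iff.1 (mk_seriesProd_mul_one_sub_phiNeg (n + 1)) n (lt_add_one n),
    coeff_sum_X_pow_mul_qPochhammer hn, sum_distinctPartitions_neg_one_pow hn]
end

section
/- For every integer n ≥ 1, the coefficient of q^n in the formal power series (−q;q)_∞ · (−ψ(−q)), where ψ(−q) = ∑_{m=1}^∞ (−1)^m q^{m²} · (∏_{j=1}^{m}(1+q^{2j−1}))^{−1}, equals D_{o,o}(n). -/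
open PowerSeries

/-- The mock theta function `ψ(-q)`. -/
noncomputable def psiNeg : PowerSeries ℚ :=
  seriesSum fun m =>
    (-1 : PowerSeries ℚ) ^ (m + 1) * X ^ ((m + 1) ^ 2)
      * Ring.inverse (∏ j ∈ Finset.range (m + 1), (1 + X ^ (2 * j + 1)))

open Finset

/-!
Multiplying `q^{m²} / ∏_{j ≤ m} (1 + q^{2j-1})` by `(-q; q)_∞` cancels the denominator and
leaves `∑_S q^{|S|}` over the sets `S` of distinct positive parts containing `1, 3, …, 2m - 1`.
If `r` is the length of the initial run `1, 3, …, 2r - 1` of odd parts of `S`, then `S` is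
counted for `m = 1, …, r` with signs `(-1)^{m+1}`, so the coefficient of `q^n` in
`-(-q; q)_∞ ψ(-q)` counts the `S` with `r` odd.

On the sets with odd smallest part and `r + #S` odd, merging the smallest even part `e` with the
last run part `2r - 1`, or splitting the smallest odd part past the run into `2r + 1` and an
even part, is a sum-preserving involution that changes `r` and `#S` by one. It pairs the sets
with `r` odd and `#S` even with those with `r` even, `#S` odd and odd smallest part. As `r` odd
forces the smallest part to be `1`, the sets with `r` odd are therefore as many as those with
`#S` odd and odd smallest part, which are counted by `D_{o,o}(n)`.
-/

section PowerSeriesCoeff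

variable {R : Type*}

theorem coeff_mul_eq_of_coeff_eq [Semiring R] {f g f' g' : R⟦X⟧} {n : ℕ}
    (hf : ∀ i ≤ n, coeff i f = coeff i f') (hg : ∀ i ≤ n, coeff i g = coeff i g') :
    coeff n (f * g) = coeff n (f' * g') := by
  simp only [coeff_mul]
  refine sum_congr rfl fun p hp => ?_
  rw [hf _ (HasAntidiagonal.antidiagonal.fst_le hp), hg _ (HasAntidiagonal.antidiagonal.snd_le hp)]

theorem coeff_seriesSum_eq_coeff_sum [CommRing R] {f : ℕ → R⟦X⟧}
    (hf : ∀ m, ∀ N < m, coeff N (f m) = 0) {n j : ℕ} (hj : j ≤ n) :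
    coeff j (seriesSum f) = coeff j (∑ m ∈ range (n + 1), f m) := by
  rw [seriesSum, coeff_mk, map_sum]
  exact sum_subset (range_subset_range.2 (by omega)) fun m _ hm => hf m j (by simpa using hm)

theorem coeff_sum_X_pow_sum [Semiring R] (F : Finset (Finset ℕ)) (N : ℕ) :
    coeff N (∑ T ∈ F, X ^ ∑ x ∈ T, x : R⟦X⟧) = #{T ∈ F | ∑ x ∈ T, x = N} := by
  simp only [map_sum, coeff_X_pow, ← sum_boole, eq_comm]

theorem prod_X_pow_add_ite_eq_sum [CommSemiring R] {s t : Finset ℕ} (hts : t ⊆ s) :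
    ∏ x ∈ s, (X ^ x + if x ∈ t then 0 else 1 : R⟦X⟧) =
      ∑ T ∈ s.powerset with t ⊆ T, X ^ ∑ x ∈ T, x := by
  rw [prod_add, sum_filter]
  refine sum_congr rfl fun T hT => ?_
  rw [prod_pow_eq_pow_sum]
  split_ifs with htT
  · rw [prod_eq_one fun x hx => if_neg fun hxt => (mem_sdiff.1 hx).2 (htT hxt), mul_one]
  · obtain ⟨x, hxt, hxT⟩ := not_subset.1 htT
    rw [prod_eq_zero (mem_sdiff.2 ⟨hts hxt, hxT⟩) (by simp [hxt]), mul_zero]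

theorem coeff_prod_X_pow_add_ite [CommSemiring R] {s t : Finset ℕ} (hts : t ⊆ s) (N : ℕ) :
    coeff N (∏ x ∈ s, (X ^ x + if x ∈ t then 0 else 1 : R⟦X⟧)) =
      #{T ∈ s.powerset | t ⊆ T ∧ ∑ x ∈ T, x = N} := by
  rw [prod_X_pow_add_ite_eq_sum hts, coeff_sum_X_pow_sum, filter_filter]

theorem prod_one_add_X_pow_mul_X_pow_mul_inverse [CommRing R] {s t : Finset ℕ} (hts : t ⊆ s)
    (ht : 0 ∉ t) :
    (∏ x ∈ s, (1 + X ^ x)) * (X ^ (∑ x ∈ t, x) * Ring.inverse (∏ x ∈ t, (1 + X ^ x))) =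
      ∏ x ∈ s, (X ^ x + if x ∈ t then 0 else 1 : R⟦X⟧) := by
  have hunit : IsUnit (∏ x ∈ t, (1 + X ^ x : R⟦X⟧)) := by
    refine IsUnit.prod_iff.2 fun x hx => isUnit_iff_constantCoeff.2 ?_
    simp [zero_pow (ne_of_mem_of_not_mem hx ht)]
  have houtside : ∏ x ∈ s \ t, (X ^ x + if x ∈ t then 0 else 1 : R⟦X⟧) = ∏ x ∈ s \ t, (1 + X ^ x) :=
    prod_congr rfl fun x hx => by rw [if_neg (mem_sdiff.1 hx).2, add_comm]
  have hinside : ∏ x ∈ t, (X ^ x + if x ∈ t then 0 else 1 : R⟦X⟧) = ∏ x ∈ t, X ^ x :=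
    prod_congr rfl fun x hx => by rw [if_pos hx, add_zero]
  rw [← mul_assoc, eq_comm, Ring.eq_mul_inverse_iff_mul_eq _ _ _ hunit, ← prod_sdiff hts,
    ← prod_sdiff hts (f := fun x => 1 + X ^ x), houtside, hinside, prod_pow_eq_pow_sum]
  ring

end PowerSeriesCoeff

section DistinctPartSets

def distinctPartSets (n : ℕ) : Finset (Finset ℕ) :=
  {S ∈ (Icc 1 n).powerset | ∑ x ∈ S, x = n}

theorem le_of_mem_of_sum_eq {S : Finset ℕ} {n x : ℕ} (hS : ∑ y ∈ S, y = n) (hx : x ∈ S) :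
    x ≤ n :=
  hS ▸ single_le_sum (f := id) (fun _ _ => Nat.zero_le _) hx

theorem mem_distinctPartSets {n : ℕ} {S : Finset ℕ} :
    S ∈ distinctPartSets n ↔ 0 ∉ S ∧ ∑ x ∈ S, x = n := by
  simp only [distinctPartSets, mem_filter, mem_powerset]
  refine ⟨fun ⟨hsub, hsum⟩ => ⟨fun h0 => by simpa using hsub h0, hsum⟩,
    fun ⟨h0, hsum⟩ => ⟨fun x hx => mem_Icc.2 ⟨?_, le_of_mem_of_sum_eq hsum hx⟩, hsum⟩⟩
  exact Nat.pos_of_ne_zero fun h => h0 (h ▸ hx)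

theorem filter_powerset_Icc_sum_eq {n K : ℕ} (h : n ≤ K) :
    {S ∈ (Icc 1 K).powerset | ∑ x ∈ S, x = n} = distinctPartSets n := by
  ext S
  rw [mem_distinctPartSets, mem_filter, mem_powerset]
  refine ⟨fun ⟨hsub, hsum⟩ => ⟨fun h0 => by simpa using hsub h0, hsum⟩,
    fun ⟨h0, hsum⟩ => ⟨fun x hx => ?_, hsum⟩⟩
  have := le_of_mem_of_sum_eq hsum hx
  exact mem_Icc.2 ⟨Nat.pos_of_ne_zero fun h => h0 (h ▸ hx), by omega⟩

end DistinctPartSets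

section OddRun

def oddStair (r : ℕ) : Finset ℕ := (range r).image fun i => 2 * i + 1

theorem mem_oddStair {r x : ℕ} : x ∈ oddStair r ↔ ∃ i < r, 2 * i + 1 = x := by
  simp [oddStair]

theorem card_oddStair (r : ℕ) : #(oddStair r) = r := by
  rw [oddStair, card_image_of_injective _ fun a b h => by omega, card_range]

theorem sum_oddStair (r : ℕ) : ∑ x ∈ oddStair r, x = r ^ 2 := by
  rw [oddStair, sum_image fun a _ b _ h => by omega]
  induction r with
  | zero => simp
  | succ k ih => rw [sum_range_succ, ih]; ring

theorem zero_notMem_oddStair (r : ℕ) : 0 ∉ oddStair r := by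
  simp [mem_oddStair]

theorem oddStair_subset_Icc {r K : ℕ} (h : 2 * r ≤ K + 1) : oddStair r ⊆ Icc 1 K := by
  intro x hx
  obtain ⟨i, hi, rfl⟩ := mem_oddStair.1 hx
  exact mem_Icc.2 ⟨by omega, by omega⟩

noncomputable def oddRun (S : Finset ℕ) : ℕ := sInf {r | 2 * r + 1 ∉ S}

theorem two_mul_oddRun_add_one_notMem (S : Finset ℕ) : 2 * oddRun S + 1 ∉ S := by
  refine Nat.sInf_mem (s := {r | 2 * r + 1 ∉ S}) ⟨S.sup id, fun h => ?_⟩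
  have := le_sup (f := id) h
  simp only [id_eq] at this
  omega

theorem two_mul_add_one_mem_of_lt_oddRun {S : Finset ℕ} {i : ℕ} (h : i < oddRun S) :
    2 * i + 1 ∈ S :=
  not_not.1 fun hi => (Nat.sInf_le hi).not_gt h

theorem oddRun_eq {S : Finset ℕ} {r : ℕ} (hlt : ∀ i < r, 2 * i + 1 ∈ S) (hr : 2 * r + 1 ∉ S) :
    oddRun S = r :=
  le_antisymm (Nat.sInf_le hr) (not_lt.1 fun h => two_mul_oddRun_add_one_notMem S (hlt _ h))

theorem oddStair_subset_iff {S : Finset ℕ} {r : ℕ} : oddStair r ⊆ S ↔ r ≤ oddRun S := by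
  refine ⟨fun h => not_lt.1 fun hlt => two_mul_oddRun_add_one_notMem S
    (h (mem_oddStair.2 ⟨_, hlt, rfl⟩)), fun h x hx => ?_⟩
  obtain ⟨i, hi, rfl⟩ := mem_oddStair.1 hx
  exact two_mul_add_one_mem_of_lt_oddRun (by omega)

theorem oddRun_le_of_sum_eq {S : Finset ℕ} {n : ℕ} (hS : ∑ x ∈ S, x = n) : oddRun S ≤ n :=
  not_lt.1 fun h => by
    have := le_of_mem_of_sum_eq hS (two_mul_add_one_mem_of_lt_oddRun h)
    omega

theorem sInf_eq_one_of_oddRun_pos {S : Finset ℕ} (h0 : 0 ∉ S) (h : 0 < oddRun S) :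
    sInf (S : Set ℕ) = 1 := by
  have h1 : 1 ∈ S := two_mul_add_one_mem_of_lt_oddRun h
  have hle : sInf (S : Set ℕ) ≤ 1 := Nat.sInf_le h1
  have hmem : sInf (S : Set ℕ) ∈ S := Nat.sInf_mem ⟨1, h1⟩
  exact le_antisymm hle (Nat.pos_of_ne_zero fun h => h0 (h ▸ hmem))

end OddRun

section MergeSplit

noncomputable def minEven (S : Finset ℕ) : ℕ := sInf {x | x ∈ S ∧ Even x}

noncomputable def minOddPastRun (S : Finset ℕ) : ℕ :=
  sInf {x | x ∈ S ∧ Odd x ∧ 2 * oddRun S ≤ x}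

def MergeCond (S : Finset ℕ) : Prop :=
  (∃ x ∈ S, Even x) ∧
    ∀ y ∈ S, Odd y → 2 * oddRun S ≤ y → minEven S + 2 * oddRun S - 1 < y

/-- With `r = oddRun S`: merge the smallest even part `e` with the last run part `2r - 1`, or
split the smallest odd part `o` past the run into `2r + 1` and `o - 2r - 1`. `MergeCond S` holds
exactly when the merged part is again the smallest odd part past the shortened run, which makes
the two moves inverse to each other. -/
noncomputable def mergeSplit (S : Finset ℕ) : Finset ℕ :=
  open scoped Classical in
  if MergeCond S then
    insert (minEven S + 2 * oddRun S - 1) ((S.erase (minEven S)).erase (2 * oddRun S - 1))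
  else
    insert (2 * oddRun S + 1) (insert (minOddPastRun S - (2 * oddRun S + 1))
      (S.erase (minOddPastRun S)))

variable {S : Finset ℕ}

theorem minEven_mem (h : ∃ x ∈ S, Even x) : minEven S ∈ S ∧ Even (minEven S) :=
  Nat.sInf_mem (s := {x | x ∈ S ∧ Even x}) h

theorem minEven_le {x : ℕ} (hx : x ∈ S) (he : Even x) : minEven S ≤ x :=
  Nat.sInf_le ⟨hx, he⟩

theorem minOddPastRun_mem (h : ∃ x ∈ S, Odd x ∧ 2 * oddRun S ≤ x) :
    minOddPastRun S ∈ S ∧ Odd (minOddPastRun S) ∧ 2 * oddRun S ≤ minOddPastRun S :=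
  Nat.sInf_mem (s := {x | x ∈ S ∧ Odd x ∧ 2 * oddRun S ≤ x}) h

theorem minOddPastRun_le {x : ℕ} (hx : x ∈ S) (ho : Odd x) (hr : 2 * oddRun S ≤ x) :
    minOddPastRun S ≤ x :=
  Nat.sInf_le ⟨hx, ho, hr⟩

end MergeSplit

section Merge

variable {S : Finset ℕ} {r : ℕ}

theorem oddRun_pos_of_mergeCond (hmin : Odd (sInf (S : Set ℕ))) (hm : MergeCond S) :
    0 < oddRun S := by
  obtain ⟨hE, hlt⟩ := hm
  obtain ⟨heS, k, hk⟩ := minEven_mem hE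
  obtain ⟨x, hx, -⟩ := hE
  have hmS : sInf (S : Set ℕ) ∈ S := Nat.sInf_mem ⟨x, hx⟩
  have hle : sInf (S : Set ℕ) ≤ minEven S := Nat.sInf_le heS
  by_contra h
  have := hlt _ hmS hmin (by omega)
  obtain ⟨j, hj⟩ := hmin
  omega

theorem mergeCond_spec (h0 : 0 ∉ S) (hm : MergeCond S) (hr : oddRun S = r + 1) :
    minEven S ∈ S ∧ Even (minEven S) ∧ 2 ≤ minEven S ∧ 2 * r + 1 ∈ S ∧
      minEven S + 2 * r + 1 ∉ S ∧ ∀ y ∈ S, Odd y → 2 * r + 2 ≤ y → minEven S + 2 * r + 1 < y := by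
  obtain ⟨heS, he⟩ := minEven_mem hm.1
  have hlt : ∀ y ∈ S, Odd y → 2 * r + 2 ≤ y → minEven S + 2 * r + 1 < y := fun y hy ho hy2 => by
    have := hm.2 y hy ho (by omega)
    omega
  have he2 : 2 ≤ minEven S := by
    obtain ⟨k, hk⟩ := he
    have : minEven S ≠ 0 := fun h => h0 (h ▸ heS)
    omega
  refine ⟨heS, he, he2, two_mul_add_one_mem_of_lt_oddRun (by omega), fun hv => ?_, hlt⟩
  exact (hlt _ hv (he.add_odd (odd_two_mul_add_one r)) (by omega)).false

theorem mergeSplit_eq_of_mergeCond (hm : MergeCond S) (hr : oddRun S = r + 1) :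
    mergeSplit S = insert (minEven S + 2 * r + 1) ((S.erase (minEven S)).erase (2 * r + 1)) := by
  rw [mergeSplit, if_pos hm, hr, show minEven S + 2 * (r + 1) - 1 = minEven S + 2 * r + 1 by omega,
    show 2 * (r + 1) - 1 = 2 * r + 1 by omega]

theorem mem_mergeSplit_of_mergeCond {x : ℕ} (hm : MergeCond S) (hr : oddRun S = r + 1) :
    x ∈ mergeSplit S ↔ x = minEven S + 2 * r + 1 ∨ x ∈ S ∧ x ≠ minEven S ∧ x ≠ 2 * r + 1 := by
  rw [mergeSplit_eq_of_mergeCond hm hr]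
  simp only [mem_insert, mem_erase]
  tauto

theorem oddRun_mergeSplit_of_mergeCond (h0 : 0 ∉ S) (hm : MergeCond S) (hr : oddRun S = r + 1) :
    oddRun (mergeSplit S) = r := by
  obtain ⟨-, ⟨k, hk⟩, he2, -⟩ := mergeCond_spec h0 hm hr
  refine oddRun_eq
    (fun i hi => (mem_mergeSplit_of_mergeCond hm hr).2 (Or.inr ⟨?_, by omega, by omega⟩))
    fun h => ?_
  · exact two_mul_add_one_mem_of_lt_oddRun (by omega)
  · rcases (mem_mergeSplit_of_mergeCond hm hr).1 h with h | ⟨-, -, h⟩ <;> omega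

theorem minOddPastRun_mergeSplit_of_mergeCond (h0 : 0 ∉ S) (hm : MergeCond S)
    (hr : oddRun S = r + 1) : minOddPastRun (mergeSplit S) = minEven S + 2 * r + 1 := by
  obtain ⟨-, he, -, -, -, hlt⟩ := mergeCond_spec h0 hm hr
  have hrun := oddRun_mergeSplit_of_mergeCond h0 hm hr
  have hv : minEven S + 2 * r + 1 ∈ mergeSplit S :=
    (mem_mergeSplit_of_mergeCond hm hr).2 (Or.inl rfl)
  have hvodd : Odd (minEven S + 2 * r + 1) := he.add_odd (odd_two_mul_add_one r)
  have hle := minOddPastRun_le hv hvodd (by omega)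
  obtain ⟨hoT, ho, hor⟩ := minOddPastRun_mem ⟨_, hv, hvodd, by omega⟩
  rcases (mem_mergeSplit_of_mergeCond hm hr).1 hoT with h | ⟨hoS, -, hne⟩
  · exact h
  · have := hlt _ hoS ho (by obtain ⟨j, hj⟩ := ho; omega)
    omega

theorem not_mergeCond_mergeSplit_of_mergeCond (h0 : 0 ∉ S) (hm : MergeCond S)
    (hr : oddRun S = r + 1) : ¬ MergeCond (mergeSplit S) := by
  rintro ⟨hE, hlt⟩
  obtain ⟨-, he, -⟩ := mergeCond_spec h0 hm hr
  obtain ⟨heT, he'⟩ := minEven_mem hE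
  have hv : minEven S + 2 * r + 1 ∈ mergeSplit S :=
    (mem_mergeSplit_of_mergeCond hm hr).2 (Or.inl rfl)
  have hrun := oddRun_mergeSplit_of_mergeCond h0 hm hr
  have := hlt _ hv (he.add_odd (odd_two_mul_add_one r)) (by omega)
  obtain ⟨k, hk⟩ := he
  obtain ⟨j, hj⟩ := he'
  rcases (mem_mergeSplit_of_mergeCond hm hr).1 heT with h | ⟨heS, hne, -⟩
  · omega
  · have := minEven_le heS ⟨j, hj⟩
    omega

theorem odd_sInf_mergeSplit_of_mergeCond (h0 : 0 ∉ S) (hm : MergeCond S)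
    (hr : oddRun S = r + 1) : Odd (sInf (mergeSplit S : Set ℕ)) := by
  obtain ⟨-, ⟨k, hk⟩, he2, -⟩ := mergeCond_spec h0 hm hr
  have hv : minEven S + 2 * r + 1 ∈ mergeSplit S :=
    (mem_mergeSplit_of_mergeCond hm hr).2 (Or.inl rfl)
  have hmem : sInf (mergeSplit S : Set ℕ) ∈ mergeSplit S := Nat.sInf_mem ⟨_, hv⟩
  refine Nat.not_even_iff_odd.1 fun hev => ?_
  obtain ⟨j, hj⟩ := id hev
  rcases (mem_mergeSplit_of_mergeCond hm hr).1 hmem with h | ⟨hS, hne, -⟩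
  · omega
  · have hlt := lt_of_le_of_ne (minEven_le hS hev) (Ne.symm hne)
    rcases r.eq_zero_or_pos with rfl | hpos
    · have := Nat.sInf_le (s := (mergeSplit S : Set ℕ)) hv
      omega
    · have h1 : 1 ∈ mergeSplit S := (mem_mergeSplit_of_mergeCond hm hr).2
        (Or.inr ⟨two_mul_add_one_mem_of_lt_oddRun (i := 0) (by omega), by omega, by omega⟩)
      have := Nat.sInf_le (s := (mergeSplit S : Set ℕ)) h1
      omega

theorem sum_card_mergeSplit_of_mergeCond (h0 : 0 ∉ S) (hm : MergeCond S) (hr : oddRun S = r + 1) :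
    ∑ x ∈ mergeSplit S, x = ∑ x ∈ S, x ∧ #(mergeSplit S) + 1 = #S := by
  obtain ⟨heS, ⟨k, hk⟩, -, hrS, hv, -⟩ := mergeCond_spec h0 hm hr
  have hrS' : 2 * r + 1 ∈ S.erase (minEven S) := mem_erase.2 ⟨by omega, hrS⟩
  have hv' : minEven S + 2 * r + 1 ∉ (S.erase (minEven S)).erase (2 * r + 1) :=
    fun h => hv (mem_of_mem_erase (mem_of_mem_erase h))
  rw [mergeSplit_eq_of_mergeCond hm hr, sum_insert hv', card_insert_of_notMem hv']
  have := sum_erase_add _ id hrS'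
  have := sum_erase_add _ id heS
  have := card_erase_add_one hrS'
  have := card_erase_add_one heS
  simp only [id] at *
  omega

theorem mergeSplit_mergeSplit_of_mergeCond (h0 : 0 ∉ S) (hm : MergeCond S)
    (hr : oddRun S = r + 1) : mergeSplit (mergeSplit S) = S := by
  obtain ⟨heS, ⟨k, hk⟩, -, hrS, hv, -⟩ := mergeCond_spec h0 hm hr
  have hv' : minEven S + 2 * r + 1 ∉ (S.erase (minEven S)).erase (2 * r + 1) :=
    fun h => hv (mem_of_mem_erase (mem_of_mem_erase h))
  rw [mergeSplit, if_neg (not_mergeCond_mergeSplit_of_mergeCond h0 hm hr),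
    oddRun_mergeSplit_of_mergeCond h0 hm hr, minOddPastRun_mergeSplit_of_mergeCond h0 hm hr,
    show minEven S + 2 * r + 1 - (2 * r + 1) = minEven S by omega, mergeSplit_eq_of_mergeCond hm hr,
    erase_insert hv', erase_right_comm, insert_erase (mem_erase.2 ⟨by omega, heS⟩),
    insert_erase hrS]

end Merge

section Split

variable {S : Finset ℕ}

theorem exists_odd_mem_of_not_mergeCond (hs : ¬ MergeCond S) (hpar : Odd (oddRun S + #S)) :
    ∃ x ∈ S, Odd x ∧ 2 * oddRun S ≤ x := by
  by_contra! hno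
  have hodd : ∀ x ∈ S, Odd x := fun x hx =>
    Nat.not_even_iff_odd.1 fun he =>
      hs ⟨⟨x, hx, he⟩, fun y hy ho hy2 => absurd (hno y hy ho) (by omega)⟩
  have hstair : S = oddStair (oddRun S) := by
    ext x
    refine ⟨fun hx => ?_, fun hx => oddStair_subset_iff.2 le_rfl hx⟩
    obtain ⟨i, rfl⟩ := hodd x hx
    exact mem_oddStair.2 ⟨i, by have := hno _ hx ⟨i, rfl⟩; omega, rfl⟩
  have hcard : #S = oddRun S := (congrArg card hstair).trans (card_oddStair _)
  rw [hcard, ← two_mul] at hpar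
  exact Nat.not_even_iff_odd.2 hpar (even_two_mul _)

theorem minOddPastRun_add_one_le_of_not_mergeCond (hs : ¬ MergeCond S) {x : ℕ} (hx : x ∈ S)
    (he : Even x) : minOddPastRun S + 1 ≤ x + 2 * oddRun S := by
  obtain ⟨y, hy, ho, hy2, hle⟩ :
      ∃ y ∈ S, Odd y ∧ 2 * oddRun S ≤ y ∧ y ≤ minEven S + 2 * oddRun S - 1 := by
    by_contra! h
    exact hs ⟨⟨x, hx, he⟩, h⟩
  have := minOddPastRun_le hy ho hy2
  have := minEven_le hx he
  obtain ⟨j, hj⟩ := ho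
  omega

theorem not_mergeCond_spec (hs : ¬ MergeCond S) (hpar : Odd (oddRun S + #S)) :
    minOddPastRun S ∈ S ∧ Odd (minOddPastRun S) ∧ 2 * oddRun S + 3 ≤ minOddPastRun S ∧
      minOddPastRun S - (2 * oddRun S + 1) ∉ S := by
  obtain ⟨hoS, ho, hle⟩ := minOddPastRun_mem (exists_odd_mem_of_not_mergeCond hs hpar)
  have hne : minOddPastRun S ≠ 2 * oddRun S + 1 :=
    fun h => two_mul_oddRun_add_one_notMem S (h ▸ hoS)
  obtain ⟨j, hj⟩ := id ho
  refine ⟨hoS, ho, by omega, fun hc => ?_⟩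
  have := minOddPastRun_add_one_le_of_not_mergeCond hs hc ⟨j - oddRun S, by omega⟩
  omega

theorem mem_mergeSplit_of_not_mergeCond (hs : ¬ MergeCond S) {x : ℕ} :
    x ∈ mergeSplit S ↔ x = 2 * oddRun S + 1 ∨ x = minOddPastRun S - (2 * oddRun S + 1) ∨
      x ∈ S ∧ x ≠ minOddPastRun S := by
  rw [mergeSplit, if_neg hs]
  simp only [mem_insert, mem_erase]
  tauto

theorem oddRun_mergeSplit_of_not_mergeCond (hs : ¬ MergeCond S) (hpar : Odd (oddRun S + #S)) :
    oddRun (mergeSplit S) = oddRun S + 1 := by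
  obtain ⟨-, ⟨j, hj⟩, hle, -⟩ := not_mergeCond_spec hs hpar
  refine oddRun_eq (fun i hi => (mem_mergeSplit_of_not_mergeCond hs).2 ?_) fun h => ?_
  · rcases Nat.lt_succ_iff_lt_or_eq.1 hi with hi | rfl
    · exact Or.inr (Or.inr ⟨two_mul_add_one_mem_of_lt_oddRun hi, by omega⟩)
    · exact Or.inl rfl
  · rcases (mem_mergeSplit_of_not_mergeCond hs).1 h with h | h | ⟨hS, hne⟩
    · omega
    · omega
    · have := minOddPastRun_le hS (odd_two_mul_add_one _) (by omega)
      omega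

theorem minEven_mergeSplit_of_not_mergeCond (hs : ¬ MergeCond S) (hpar : Odd (oddRun S + #S)) :
    minEven (mergeSplit S) = minOddPastRun S - (2 * oddRun S + 1) := by
  obtain ⟨-, ⟨j, hj⟩, hle, -⟩ := not_mergeCond_spec hs hpar
  have hcT : minOddPastRun S - (2 * oddRun S + 1) ∈ mergeSplit S :=
    (mem_mergeSplit_of_not_mergeCond hs).2 (Or.inr (Or.inl rfl))
  have hc : Even (minOddPastRun S - (2 * oddRun S + 1)) := ⟨j - oddRun S, by omega⟩
  have hle := minEven_le hcT hc
  obtain ⟨heT, he⟩ := minEven_mem ⟨_, hcT, hc⟩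
  rcases (mem_mergeSplit_of_not_mergeCond hs).1 heT with h | h | ⟨heS, -⟩
  · obtain ⟨k, hk⟩ := he
    omega
  · exact h
  · have := minOddPastRun_add_one_le_of_not_mergeCond hs heS he
    omega

theorem mergeCond_mergeSplit_of_not_mergeCond (hs : ¬ MergeCond S)
    (hpar : Odd (oddRun S + #S)) : MergeCond (mergeSplit S) := by
  obtain ⟨-, ⟨j, hj⟩, hle, -⟩ := not_mergeCond_spec hs hpar
  refine ⟨⟨_, (mem_mergeSplit_of_not_mergeCond hs).2 (Or.inr (Or.inl rfl)),
    ⟨j - oddRun S, by omega⟩⟩, fun y hy ho hy2 => ?_⟩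
  rw [minEven_mergeSplit_of_not_mergeCond hs hpar, oddRun_mergeSplit_of_not_mergeCond hs hpar] at *
  obtain ⟨k, hk⟩ := id ho
  rcases (mem_mergeSplit_of_not_mergeCond hs).1 hy with h | h | ⟨hS, hne⟩
  · omega
  · omega
  · have := minOddPastRun_le hS ho (by omega)
    omega

theorem sum_card_mergeSplit_of_not_mergeCond (hs : ¬ MergeCond S) (hpar : Odd (oddRun S + #S)) :
    ∑ x ∈ mergeSplit S, x = ∑ x ∈ S, x ∧ #(mergeSplit S) = #S + 1 := by
  obtain ⟨hoS, ⟨j, hj⟩, hle, hc⟩ := not_mergeCond_spec hs hpar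
  have hc' : minOddPastRun S - (2 * oddRun S + 1) ∉ S.erase (minOddPastRun S) :=
    fun h => hc (mem_of_mem_erase h)
  have hr' : 2 * oddRun S + 1 ∉ insert (minOddPastRun S - (2 * oddRun S + 1))
      (S.erase (minOddPastRun S)) := by
    rw [mem_insert, not_or]
    exact ⟨by omega, fun h => two_mul_oddRun_add_one_notMem S (mem_of_mem_erase h)⟩
  rw [mergeSplit, if_neg hs, sum_insert hr', sum_insert hc', card_insert_of_notMem hr',
    card_insert_of_notMem hc']
  have := sum_erase_add _ id hoS
  have := card_erase_add_one hoS
  simp only [id] at *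
  omega

theorem mergeSplit_mergeSplit_of_not_mergeCond (hs : ¬ MergeCond S)
    (hpar : Odd (oddRun S + #S)) : mergeSplit (mergeSplit S) = S := by
  obtain ⟨hoS, ⟨j, hj⟩, hle, hc⟩ := not_mergeCond_spec hs hpar
  rw [mergeSplit, if_pos (mergeCond_mergeSplit_of_not_mergeCond hs hpar),
    minEven_mergeSplit_of_not_mergeCond hs hpar, oddRun_mergeSplit_of_not_mergeCond hs hpar,
    show minOddPastRun S - (2 * oddRun S + 1) + 2 * (oddRun S + 1) - 1 = minOddPastRun S by omega,
    show 2 * (oddRun S + 1) - 1 = 2 * oddRun S + 1 by omega, mergeSplit, if_neg hs,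
    erase_insert_of_ne (by omega), erase_insert fun h => hc (mem_of_mem_erase h),
    erase_insert fun h => two_mul_oddRun_add_one_notMem S (mem_of_mem_erase h), insert_erase hoS]

end Split

section Involution

theorem mergeSplit_spec {S : Finset ℕ} (h0 : 0 ∉ S) (hmin : Odd (sInf (S : Set ℕ)))
    (hpar : Odd (oddRun S + #S)) :
    0 ∉ mergeSplit S ∧ ∑ x ∈ mergeSplit S, x = ∑ x ∈ S, x ∧ Odd (sInf (mergeSplit S : Set ℕ)) ∧
      mergeSplit (mergeSplit S) = S ∧
      (oddRun (mergeSplit S) + 1 = oddRun S ∧ #(mergeSplit S) + 1 = #S ∨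
        oddRun (mergeSplit S) = oddRun S + 1 ∧ #(mergeSplit S) = #S + 1) := by
  by_cases hm : MergeCond S
  · obtain ⟨r, hr⟩ := Nat.exists_eq_add_one_of_ne_zero (oddRun_pos_of_mergeCond hmin hm).ne'
    obtain ⟨hsum, hcard⟩ := sum_card_mergeSplit_of_mergeCond h0 hm hr
    refine ⟨fun h => ?_, hsum, odd_sInf_mergeSplit_of_mergeCond h0 hm hr,
      mergeSplit_mergeSplit_of_mergeCond h0 hm hr,
      Or.inl ⟨by rw [oddRun_mergeSplit_of_mergeCond h0 hm hr, hr], hcard⟩⟩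
    rcases (mem_mergeSplit_of_mergeCond hm hr).1 h with h | ⟨h, -⟩
    · omega
    · exact h0 h
  · obtain ⟨hsum, hcard⟩ := sum_card_mergeSplit_of_not_mergeCond hm hpar
    have hrun := oddRun_mergeSplit_of_not_mergeCond hm hpar
    have h0' : 0 ∉ mergeSplit S := fun h => by
      obtain ⟨-, -, hle, -⟩ := not_mergeCond_spec hm hpar
      rcases (mem_mergeSplit_of_not_mergeCond hm).1 h with h | h | ⟨h, -⟩
      · omega
      · omega
      · exact h0 h
    refine ⟨h0', hsum, ?_, mergeSplit_mergeSplit_of_not_mergeCond hm hpar, Or.inr ⟨hrun, hcard⟩⟩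
    rw [sInf_eq_one_of_oddRun_pos h0' (by omega)]
    exact odd_one

theorem card_filter_eq_card_filter_not_of_involution {α : Type*} {F : Finset α} {p : α → Prop}
    [DecidablePred p] (f : α → α) (hmaps : ∀ x ∈ F, f x ∈ F) (hinv : ∀ x ∈ F, f (f x) = x)
    (hflip : ∀ x ∈ F, p (f x) ↔ ¬ p x) : #{x ∈ F | p x} = #{x ∈ F | ¬ p x} := by
  refine card_nbij' f f (fun x hx => ?_) (fun x hx => ?_) (fun x hx => hinv x (mem_filter.1 hx).1)
    fun x hx => hinv x (mem_filter.1 hx).1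
  all_goals
    obtain ⟨hxF, hpx⟩ := mem_filter.1 hx
    refine mem_filter.2 ⟨hmaps x hxF, ?_⟩
  · exact not_not.2 hpx ∘ (hflip x hxF).1
  · exact (hflip x hxF).2 hpx

theorem odd_sInf_of_odd_oddRun {S : Finset ℕ} (h0 : 0 ∉ S) (h : Odd (oddRun S)) :
    Odd (sInf (S : Set ℕ)) := by
  rw [sInf_eq_one_of_oddRun_pos h0 h.pos]
  exact odd_one

theorem card_odd_oddRun_eq_card_odd_card_odd_sInf (n : ℕ) :
    #{S ∈ distinctPartSets n | Odd (oddRun S)} =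
      #{S ∈ distinctPartSets n | Odd #S ∧ Odd (sInf (S : Set ℕ))} := by
  set F : Finset (Finset ℕ) :=
    {S ∈ distinctPartSets n | Odd (sInf (S : Set ℕ)) ∧ Odd (oddRun S + #S)} with hFdef
  have hF : ∀ S ∈ F, 0 ∉ S ∧ ∑ x ∈ S, x = n ∧ Odd (sInf (S : Set ℕ)) ∧ Odd (oddRun S + #S) :=
    fun S hS => by
      rw [mem_filter, mem_distinctPartSets] at hS
      exact ⟨hS.1.1, hS.1.2, hS.2⟩
  have hflip : #{S ∈ F | Odd (oddRun S)} = #{S ∈ F | ¬ Odd (oddRun S)} := by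
    refine card_filter_eq_card_filter_not_of_involution mergeSplit (fun S hS => ?_)
      (fun S hS => ?_) (fun S hS => ?_)
    all_goals obtain ⟨h0, hsum, hmin, hpar⟩ := hF S hS
    all_goals obtain ⟨h0', hsum', hmin', hinv, hrc⟩ := mergeSplit_spec h0 hmin hpar
    · refine mem_filter.2 ⟨mem_distinctPartSets.2 ⟨h0', hsum'.trans hsum⟩, hmin', ?_⟩
      rcases hrc with ⟨h1, h2⟩ | ⟨h1, h2⟩ <;> rw [Nat.odd_iff] at hpar ⊢ <;> omega
    · exact hinv
    · rcases hrc with ⟨h1, -⟩ | ⟨h1, -⟩ <;> simp only [Nat.odd_iff] <;> omega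
  rw [← card_filter_add_card_filter_not (s := {S ∈ distinctPartSets n | Odd (oddRun S)})
    (fun S => Odd #S), ← card_filter_add_card_filter_not
    (s := {S ∈ distinctPartSets n | Odd #S ∧ Odd (sInf (S : Set ℕ))}) (fun S => Odd (oddRun S))]
  simp only [hFdef, filter_filter] at hflip ⊢
  congr 1
  · refine congrArg card (filter_congr fun S hS => ?_)
    have := odd_sInf_of_odd_oddRun (mem_distinctPartSets.1 hS).1 (S := S)
    tauto
  · convert hflip using 2 <;> refine filter_congr fun S hS => ?_
    · have := odd_sInf_of_odd_oddRun (mem_distinctPartSets.1 hS).1 (S := S)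
      simp only [Nat.odd_add, ← Nat.not_odd_iff_even]
      tauto
    · simp only [Nat.odd_add, ← Nat.not_odd_iff_even]
      tauto

end Involution

theorem sum_neg_one_pow_mul_card_oddStair_subset {R : Type*} [CommRing R] (n : ℕ) :
    ∑ m ∈ range (n + 1), (-1 : R) ^ m * #{S ∈ distinctPartSets n | oddStair (m + 1) ⊆ S} =
      #{S ∈ distinctPartSets n | Odd (oddRun S)} := by
  simp only [oddStair_subset_iff, card_filter, Nat.cast_sum, mul_sum]
  rw [sum_comm]
  refine sum_congr rfl fun S hS => ?_
  have hrun := oddRun_le_of_sum_eq (mem_distinctPartSets.1 hS).2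
  have hrange : {m ∈ range (n + 1) | m + 1 ≤ oddRun S} = range (oddRun S) := by
    ext m
    simp only [mem_filter, mem_range]
    omega
  simp only [Nat.cast_ite, Nat.cast_one, Nat.cast_zero, mul_ite, mul_one, mul_zero]
  rw [← sum_filter, hrange, neg_one_geom_sum]
  by_cases h : Odd (oddRun S) <;> simp [h, ← Nat.not_odd_iff_even]

theorem Doo_eq_card (n : ℕ) :
    Doo n = #{S ∈ distinctPartSets n | Odd #S ∧ Odd (sInf (S : Set ℕ))} := by
  rw [Doo, ← Nat.card_eq_finsetCard]
  refine Nat.card_congr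
    { toFun := fun l => ⟨⟨l.1.parts, l.2.1⟩, mem_filter.2 ⟨mem_distinctPartSets.2
        ⟨fun h => (l.1.parts_pos h).false, by simpa using l.1.parts_sum⟩, l.2.2⟩⟩
      invFun := fun S => ⟨⟨S.1.1, fun hi => ?_, ?_⟩, S.1.2, (mem_filter.1 S.2).2⟩
      left_inv := fun l => rfl
      right_inv := fun S => rfl }
  · exact Nat.pos_of_ne_zero fun h => (mem_distinctPartSets.1 (mem_filter.1 S.2).1).1 (h ▸ hi)
  · simpa using (mem_distinctPartSets.1 (mem_filter.1 S.2).1).2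

section Coefficients

variable {R : Type*} [CommRing R]

theorem coeff_prod_Icc_one_add_X_pow {n K : ℕ} (h : n ≤ K) :
    coeff n (∏ x ∈ Icc 1 K, (1 + X ^ x) : R⟦X⟧) = #(distinctPartSets n) := by
  have hprod : ∏ x ∈ Icc 1 K, (1 + X ^ x : R⟦X⟧) =
      ∏ x ∈ Icc 1 K, (X ^ x + if x ∈ (∅ : Finset ℕ) then 0 else 1) := by
    simp [add_comm]
  rw [hprod, coeff_prod_X_pow_add_ite (empty_subset _), ← filter_powerset_Icc_sum_eq h]
  simp only [empty_subset, true_and]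

theorem coeff_seriesProd_one_add_X_pow_succ {i K : ℕ} (h : i ≤ K) :
    coeff i (seriesProd fun k => (1 + X ^ (k + 1) : R⟦X⟧)) =
      coeff i (∏ x ∈ Icc 1 K, (1 + X ^ x)) := by
  rw [seriesProd, coeff_mk, coeff_prod_Icc_one_add_X_pow h,
    ← coeff_prod_Icc_one_add_X_pow (K := i + 1) (by omega), range_eq_Ico,
    prod_Ico_add' (fun x => (1 + X ^ x : R⟦X⟧)), zero_add, Ico_add_one_right_eq_Icc]

end Coefficients

noncomputable def psiNegTerm (m : ℕ) : ℚ⟦X⟧ :=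
  (-1) ^ (m + 1) * X ^ ((m + 1) ^ 2) * Ring.inverse (∏ j ∈ range (m + 1), (1 + X ^ (2 * j + 1)))

theorem psiNeg_eq_seriesSum : psiNeg = seriesSum psiNegTerm := rfl

theorem coeff_psiNegTerm_of_lt {m N : ℕ} (h : N < m) : coeff N (psiNegTerm m) = 0 := by
  rw [psiNegTerm, mul_right_comm, coeff_mul_X_pow', if_neg]
  exact not_le.2 (h.trans_le ((Nat.le_succ m).trans (Nat.le_self_pow two_ne_zero _)))

theorem coeff_prod_Icc_mul_psiNegTerm {n K m : ℕ} (hn : n ≤ K) (hm : 2 * m + 1 ≤ K) :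
    coeff n ((∏ x ∈ Icc 1 K, (1 + X ^ x)) * psiNegTerm m) =
      (-1 : ℚ) ^ (m + 1) * #{S ∈ distinctPartSets n | oddStair (m + 1) ⊆ S} := by
  have hstair : oddStair (m + 1) ⊆ Icc 1 K := oddStair_subset_Icc (by omega)
  have hden : ∏ j ∈ range (m + 1), (1 + X ^ (2 * j + 1) : ℚ⟦X⟧) =
      ∏ x ∈ oddStair (m + 1), (1 + X ^ x) := by
    rw [oddStair, prod_image fun a _ b _ h => by omega]
  rw [psiNegTerm, hden, ← sum_oddStair, mul_assoc, mul_left_comm,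
    prod_one_add_X_pow_mul_X_pow_mul_inverse hstair (zero_notMem_oddStair _),
    show (-1 : ℚ⟦X⟧) ^ (m + 1) = C ((-1 : ℚ) ^ (m + 1)) by simp, coeff_C_mul,
    coeff_prod_X_pow_add_ite hstair, ← filter_powerset_Icc_sum_eq hn, filter_filter]
  rw [filter_congr fun _ _ => and_comm]

theorem stmt5_general (n : ℕ) :
    PowerSeries.coeff n (seriesProd (fun k => 1 + X ^ (k + 1)) * (-psiNeg)) =
      (Doo n : ℚ) := by
  have hψ : ∀ j ≤ n, coeff j (-psiNeg) = coeff j (-∑ m ∈ range (n + 1), psiNegTerm m) :=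
    fun j hj => by
      rw [map_neg, map_neg, psiNeg_eq_seriesSum,
        coeff_seriesSum_eq_coeff_sum (fun _ _ => coeff_psiNegTerm_of_lt) hj]
  -- `2 * n + 1` leaves room for every staircase `1, 3, …, 2m + 1` with `m ≤ n`.
  rw [coeff_mul_eq_of_coeff_eq
      (fun i hi => coeff_seriesProd_one_add_X_pow_succ (K := 2 * n + 1) (by omega)) hψ,
    mul_neg, map_neg, mul_sum, map_sum, ← sum_neg_distrib]
  calc ∑ m ∈ range (n + 1), -coeff n ((∏ x ∈ Icc 1 (2 * n + 1), (1 + X ^ x)) * psiNegTerm m)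
      = ∑ m ∈ range (n + 1), (-1 : ℚ) ^ m * #{S ∈ distinctPartSets n | oddStair (m + 1) ⊆ S} :=
        sum_congr rfl fun m hm => by
          rw [coeff_prod_Icc_mul_psiNegTerm (by omega) (by have := mem_range.1 hm; omega), pow_succ]
          ring
    _ = #{S ∈ distinctPartSets n | Odd (oddRun S)} := sum_neg_one_pow_mul_card_oddStair_subset n
    _ = Doo n := by rw [card_odd_oddRun_eq_card_odd_card_odd_sInf, Doo_eq_card]

/-- Identity (2.9). -/
theorem stmt5 (n : ℕ) (hn : 1 ≤ n) :
    PowerSeries.coeff n (seriesProd (fun k => 1 + X ^ (k + 1)) * (-psiNeg)) =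
      (Doo n : ℚ) :=
  stmt5_general n
end

section
/- In the ring of formal power series in q over the polynomial ring ℚ[z], the identity ∑_{n=1}^∞ z^n q^{n²} · (zq^{n+1};q)_∞ · ((q;q)_{n−1})^{−1} = ∑_{n=1}^∞ (−1)^{n−1} z^n q^{n(n+1)/2} holds. -/
/-!
Expanding `(z q^(n+1); q)_∞` by Euler's identity
`(z q^a; q)_∞ = ∑_j (-z)^j q^(j a + C(j,2)) / (q)_j` (valid for `a ≥ 1`) turns the left side into
a double series. Its terms with `(n - 1) + j = p` collect to `z^(p+1) q^C(p+2,2)` times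
`T p = ∑_{i+j=p} (-1)^j q^C(i+1,2) / ((q)_i (q)_j)`, and `T p = (-1)^p` because splitting
`1 - q^(i+j) = (1 - q^j) + q^j (1 - q^i)` gives `(1 - q^(p+1)) T (p+1) = -(1 - q^(p+1)) T p`.
Euler's identity holds because both of its sides `F a` satisfy `F a = (1 - z q^a) F (a+1)` and
`F a ≡ 1 mod q^a`, which determines `F a` coefficientwise.
-/

open PowerSeries

open Finset

section SeriesSum

variable {R : Type*} [CommRing R]

theorem coeff_seriesSum_s11 (f : ℕ → R⟦X⟧) (N : ℕ) :
    coeff N (seriesSum f) = ∑ n ∈ range (N + 1), coeff N (f n) :=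
  coeff_mk _ _

theorem seriesSum_sub (f g : ℕ → R⟦X⟧) :
    seriesSum (fun n => f n - g n) = seriesSum f - seriesSum g := by
  ext N
  simp only [coeff_seriesSum_s11, map_sub, sum_sub_distrib]

theorem coeff_eq_zero_of_X_pow_dvd {f : R⟦X⟧} {k N : ℕ} (hf : X ^ k ∣ f) (hN : N < k) :
    coeff N f = 0 :=
  X_pow_dvd_iff.mp hf N hN

theorem X_pow_dvd_seriesSum {f : ℕ → R⟦X⟧} {k : ℕ} (hf : ∀ n, X ^ k ∣ f n) :
    X ^ k ∣ seriesSum f :=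
  X_pow_dvd_iff.mpr fun N hN => by
    rw [coeff_seriesSum_s11]
    exact sum_eq_zero fun n _ => coeff_eq_zero_of_X_pow_dvd (hf n) hN

variable {f : ℕ → R⟦X⟧}

theorem seriesSum_eq_add_seriesSum_succ (hf : ∀ n, X ^ n ∣ f n) :
    seriesSum f = f 0 + seriesSum (fun n => f (n + 1)) := by
  ext N
  rw [map_add, coeff_seriesSum_s11, coeff_seriesSum_s11, sum_range_succ (fun n => coeff N (f (n + 1))),
    coeff_eq_zero_of_X_pow_dvd (hf (N + 1)) N.lt_succ_self, add_zero, sum_range_succ', add_comm]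

theorem mul_seriesSum (A : R⟦X⟧) (hf : ∀ n, X ^ n ∣ f n) :
    A * seriesSum f = seriesSum (fun n => A * f n) := by
  ext N
  simp only [coeff_seriesSum_s11, coeff_mul, mul_sum]
  rw [sum_comm]
  refine sum_congr rfl fun x hx => sum_subset (range_subset_range.mpr ?_) fun n _ hn => ?_
  · have := mem_antidiagonal.mp hx
    omega
  · rw [coeff_eq_zero_of_X_pow_dvd (hf n) (by simp at hn; omega), mul_zero]

theorem seriesSum_seriesSum {W : ℕ → ℕ → R⟦X⟧} (hW : ∀ m j, X ^ (m + j) ∣ W m j) :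
    seriesSum (fun m => seriesSum (W m)) =
      seriesSum (fun p => ∑ x ∈ antidiagonal p, W x.1 x.2) := by
  ext N
  simp only [coeff_seriesSum_s11, map_sum,
    Nat.sum_antidiagonal_eq_sum_range_succ (fun m j => coeff N (W m j)), Nat.succ_eq_add_one]
  rw [sum_range_diag_flip (N + 1) fun m j => coeff N (W m j)]
  refine sum_congr rfl fun m hm => (sum_subset (range_subset_range.mpr (by omega)) ?_).symm
  intro j _ hj
  exact coeff_eq_zero_of_X_pow_dvd (hW m j) (by simp at hm hj; omega)

end SeriesSum

section QFactorial

variable (R : Type*) [CommRing R]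

noncomputable def qFactorial (n : ℕ) : R⟦X⟧ :=
  ∏ k ∈ range n, (1 - X ^ (k + 1))

noncomputable def qFactorialInv (n : ℕ) : R⟦X⟧ :=
  Ring.inverse (qFactorial R n)

variable {R}

theorem isUnit_one_sub_X_pow {n : ℕ} (hn : n ≠ 0) : IsUnit (1 - X ^ n : R⟦X⟧) := by
  simp [isUnit_iff_constantCoeff, hn]

theorem isUnit_qFactorial (n : ℕ) : IsUnit (qFactorial R n) := by
  simp [isUnit_iff_constantCoeff, qFactorial]

theorem qFactorialInv_zero : qFactorialInv R 0 = 1 := by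
  simp [qFactorialInv, qFactorial]

theorem one_sub_X_pow_mul_qFactorialInv_succ (n : ℕ) :
    (1 - X ^ (n + 1)) * qFactorialInv R (n + 1) = qFactorialInv R n := by
  refine (isUnit_qFactorial n).mul_left_cancel ?_
  rw [qFactorialInv, qFactorialInv, ← mul_assoc, qFactorial, ← prod_range_succ, ← qFactorial,
    Ring.mul_inverse_cancel _ (isUnit_qFactorial _),
    Ring.mul_inverse_cancel _ (isUnit_qFactorial _)]

theorem sum_antidiagonal_qFactorialInv (n : ℕ) :
    ∑ x ∈ antidiagonal n,
      (-1 : R⟦X⟧) ^ x.2 * X ^ (x.1 + 1).choose 2 * qFactorialInv R x.1 * qFactorialInv R x.2 =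
      (-1) ^ n := by
  induction n with
  | zero => simp [qFactorialInv_zero]
  | succ n ih =>
    set T := fun n => ∑ x ∈ antidiagonal n,
      (-1 : R⟦X⟧) ^ x.2 * X ^ (x.1 + 1).choose 2 * qFactorialInv R x.1 * qFactorialInv R x.2
    have hsplit : (1 - X ^ (n + 1)) * T (n + 1) =
        ∑ x ∈ antidiagonal (n + 1), (-1 : R⟦X⟧) ^ x.2 * X ^ (x.1 + 1).choose 2 *
          qFactorialInv R x.1 * ((1 - X ^ x.2) * qFactorialInv R x.2) +
        ∑ x ∈ antidiagonal (n + 1), (-1 : R⟦X⟧) ^ x.2 * X ^ ((x.1 + 1).choose 2 + x.2) *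
          ((1 - X ^ x.1) * qFactorialInv R x.1) * qFactorialInv R x.2 := by
      rw [mul_sum, ← sum_add_distrib]
      refine sum_congr rfl fun x hx => ?_
      rw [← mem_antidiagonal.mp hx, pow_add, pow_add]
      ring
    have hA : ∑ x ∈ antidiagonal (n + 1), (-1 : R⟦X⟧) ^ x.2 * X ^ (x.1 + 1).choose 2 *
          qFactorialInv R x.1 * ((1 - X ^ x.2) * qFactorialInv R x.2) = -T n := by
      simp only [Nat.sum_antidiagonal_succ', pow_zero, sub_self, zero_mul, mul_zero, zero_add, T,
        ← sum_neg_distrib]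
      refine sum_congr rfl fun x _ => ?_
      rw [one_sub_X_pow_mul_qFactorialInv_succ, pow_succ]
      ring
    have hB : ∑ x ∈ antidiagonal (n + 1), (-1 : R⟦X⟧) ^ x.2 * X ^ ((x.1 + 1).choose 2 + x.2) *
          ((1 - X ^ x.1) * qFactorialInv R x.1) * qFactorialInv R x.2 = X ^ (n + 1) * T n := by
      simp only [Nat.sum_antidiagonal_succ, pow_zero, sub_self, zero_mul, mul_zero, zero_add, T,
        mul_sum]
      refine sum_congr rfl fun x hx => ?_
      rw [one_sub_X_pow_mul_qFactorialInv_succ, ← mem_antidiagonal.mp hx,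
        Nat.choose_succ_succ' (x.1 + 1), Nat.choose_one_right]
      rw [show x.1 + 1 + (x.1 + 1).choose 2 + x.2 = (x.1 + 1).choose 2 + (x.1 + x.2 + 1) by ring,
        pow_add]
      ring
    refine (isUnit_one_sub_X_pow n.succ_ne_zero).mul_left_cancel ?_
    rw [hsplit, hA, hB, show T n = (-1) ^ n from ih, pow_succ]
    ring

end QFactorial

section Euler

variable {R : Type*} [CommRing R]

theorem eq_seriesProd_of_forall_eq_mul {F : ℕ → R⟦X⟧} {z : R⟦X⟧} {a₀ : ℕ}
    (hrec : ∀ a, a₀ ≤ a → F a = (1 - z * X ^ a) * F (a + 1))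
    (hdvd : ∀ a, a₀ ≤ a → X ^ a ∣ F a - 1) {a : ℕ} (ha : a₀ ≤ a) :
    F a = seriesProd (fun k => 1 - z * X ^ (a + k)) := by
  have hiter (K : ℕ) : F a = (∏ k ∈ range K, (1 - z * X ^ (a + k))) * F (a + K) := by
    induction K with
    | zero => simp
    | succ K ih => rw [ih, hrec (a + K) (by omega), prod_range_succ, mul_assoc, add_assoc]
  ext N
  obtain ⟨g, hg⟩ := hdvd (a + (N + 1)) (by omega)
  rw [seriesProd, coeff_mk, hiter (N + 1), ← sub_add_cancel (F (a + (N + 1))) 1, hg, mul_add,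
    mul_one, map_add, mul_left_comm, coeff_X_pow_mul', if_neg (by omega), zero_add]

noncomputable def eulerTerm (z : R⟦X⟧) (a j : ℕ) : R⟦X⟧ :=
  (-z) ^ j * X ^ (j * a + j.choose 2) * qFactorialInv R j

theorem eulerTerm_zero (z : R⟦X⟧) (a : ℕ) : eulerTerm z a 0 = 1 := by
  simp [eulerTerm, qFactorialInv_zero]

theorem X_pow_dvd_eulerTerm (z : R⟦X⟧) {a e j : ℕ} (he : e ≤ j * a + j.choose 2) :
    X ^ e ∣ eulerTerm z a j :=
  dvd_mul_of_dvd_left (dvd_mul_of_dvd_right (pow_dvd_pow X he) _) _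

theorem X_pow_dvd_eulerTerm_self (z : R⟦X⟧) {a : ℕ} (ha : 1 ≤ a) (j : ℕ) :
    X ^ j ∣ eulerTerm z a j :=
  X_pow_dvd_eulerTerm z (by nlinarith)

theorem eulerTerm_succ_sub_eulerTerm_succ (z : R⟦X⟧) (a j : ℕ) :
    eulerTerm z a (j + 1) - eulerTerm z (a + 1) (j + 1) = -(z * X ^ a) * eulerTerm z (a + 1) j := by
  have e₁ : (j + 1) * (a + 1) + (j + 1).choose 2 = ((j + 1) * a + (j + 1).choose 2) + (j + 1) := by
    ring
  have e₂ : a + (j * (a + 1) + j.choose 2) = (j + 1) * a + (j + 1).choose 2 := by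
    rw [Nat.choose_succ_succ', Nat.choose_one_right]
    ring
  rw [eulerTerm, eulerTerm, eulerTerm, e₁, pow_add, ← e₂, pow_add,
    ← one_sub_X_pow_mul_qFactorialInv_succ j]
  ring

theorem seriesProd_eq_seriesSum_eulerTerm (z : R⟦X⟧) {a : ℕ} (ha : 1 ≤ a) :
    seriesProd (fun k => 1 - z * X ^ (a + k)) = seriesSum (eulerTerm z a) := by
  have htail (a : ℕ) (ha : 1 ≤ a) :
      seriesSum (eulerTerm z a) - 1 = seriesSum (fun j => eulerTerm z a (j + 1)) := by
    rw [seriesSum_eq_add_seriesSum_succ (X_pow_dvd_eulerTerm_self z ha), eulerTerm_zero,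
      add_sub_cancel_left]
  refine (eq_seriesProd_of_forall_eq_mul (F := fun a => seriesSum (eulerTerm z a))
    (fun a ha => ?_) (fun a ha => ?_) ha).symm
  · have hdiff : seriesSum (eulerTerm z a) - seriesSum (eulerTerm z (a + 1)) =
        -(z * X ^ a) * seriesSum (eulerTerm z (a + 1)) := by
      rw [← sub_sub_sub_cancel_right _ _ 1, htail a ha, htail (a + 1) (by omega),
        ← seriesSum_sub, mul_seriesSum _ (X_pow_dvd_eulerTerm_self z (by omega : 1 ≤ a + 1))]
      simp only [eulerTerm_succ_sub_eulerTerm_succ]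
    linear_combination hdiff
  · rw [htail a ha]
    exact X_pow_dvd_seriesSum fun j => X_pow_dvd_eulerTerm z (by nlinarith)

end Euler

section Identity

variable {R : Type*} [CommRing R]

theorem X_pow_dvd_mul_eulerTerm (z : R⟦X⟧) (m j : ℕ) :
    X ^ (m + j) ∣ z ^ (m + 1) * X ^ ((m + 1) ^ 2) * qFactorialInv R m * eulerTerm z (m + 2) j := by
  have hm : m ≤ (m + 1) ^ 2 := by nlinarith
  have hj : j ≤ j * (m + 2) + j.choose 2 := by nlinarith
  rw [pow_add]
  exact mul_dvd_mul (dvd_mul_of_dvd_left (dvd_mul_of_dvd_right (pow_dvd_pow X hm) _) _)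
    (X_pow_dvd_eulerTerm z hj)

theorem sum_antidiagonal_mul_eulerTerm (z : R⟦X⟧) (p : ℕ) :
    ∑ x ∈ antidiagonal p,
      z ^ (x.1 + 1) * X ^ ((x.1 + 1) ^ 2) * qFactorialInv R x.1 * eulerTerm z (x.1 + 2) x.2 =
      (-1) ^ p * z ^ (p + 1) * X ^ (p + 2).choose 2 := by
  rw [← sum_antidiagonal_qFactorialInv p, mul_comm, sum_mul, mul_sum]
  refine sum_congr rfl fun x hx => ?_
  obtain ⟨i, j⟩ := x
  rw [← mem_antidiagonal.mp hx]
  have hexp :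
      (i + 1) ^ 2 + (j * (i + 2) + j.choose 2) = (i + j + 2).choose 2 + (i + 1).choose 2 := by
    apply Nat.cast_injective (R := ℚ)
    push_cast [Nat.cast_choose_two]
    ring
  have hX : (X : R⟦X⟧) ^ ((i + 1) ^ 2) * X ^ (j * (i + 2) + j.choose 2) =
      X ^ (i + j + 2).choose 2 * X ^ (i + 1).choose 2 := by
    rw [← pow_add, ← pow_add, hexp]
  rw [eulerTerm, neg_pow]
  linear_combination (-1) ^ j * z ^ (i + j + 1) * qFactorialInv R i * qFactorialInv R j * hX

end Identity

/-- The second identity of Corollary 3.5. -/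
theorem stmt11 :
    seriesSum (fun m =>
      zz ^ (m + 1) * (X : PowerSeries (Polynomial ℚ)) ^ ((m + 1) ^ 2)
        * seriesProd (fun k => 1 - zz * X ^ (m + 1 + 1 + k))
        * Ring.inverse (∏ k ∈ Finset.range (m + 1 - 1), (1 - (X : PowerSeries (Polynomial ℚ)) ^ (k + 1)))) =
    seriesSum (fun m =>
      (-1 : PowerSeries (Polynomial ℚ)) ^ (m + 1 - 1) * zz ^ (m + 1)
        * X ^ ((m + 1) * (m + 1 + 1) / 2)) := by
  have hterm (m : ℕ) :
      zz ^ (m + 1) * X ^ ((m + 1) ^ 2) * seriesProd (fun k => 1 - zz * X ^ (m + 2 + k))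
        * qFactorialInv _ m =
      seriesSum fun j =>
        zz ^ (m + 1) * X ^ ((m + 1) ^ 2) * qFactorialInv _ m * eulerTerm zz (m + 2) j := by
    rw [seriesProd_eq_seriesSum_eulerTerm zz (by omega), mul_right_comm,
      mul_seriesSum _ (X_pow_dvd_eulerTerm_self zz (by omega))]
  have hdiag (p : ℕ) : (-1) ^ p * zz ^ (p + 1) * X ^ (p + 2).choose 2 =
      (-1 : PowerSeries (Polynomial ℚ)) ^ (p + 1 - 1) * zz ^ (p + 1)
        * X ^ ((p + 1) * (p + 1 + 1) / 2) := by
    rw [Nat.choose_two_right, mul_comm (p + 2)]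
    rfl
  calc _ = seriesSum fun m => seriesSum fun j =>
          zz ^ (m + 1) * X ^ ((m + 1) ^ 2) * qFactorialInv _ m * eulerTerm zz (m + 2) j :=
        congrArg seriesSum (funext hterm)
    _ = _ := by
      rw [seriesSum_seriesSum (X_pow_dvd_mul_eulerTerm zz)]
      exact congrArg seriesSum
        (funext fun p => (sum_antidiagonal_mul_eulerTerm zz p).trans (hdiag p))
end

section
/- In ℚ[[q]] the identities ∑_{n=1}^∞ q^{n(3n−1)/2} (1 − q^n) = ∑_{n=1}^∞ (−1)^{n−1} q^{n(n+1)/2} · (∏_{j=1}^{n}(1+q^j))^{−1} and ∑_{n=1}^∞ q^{n(3n−1)/2} (1 − q^n) = ∑_{n=1}^∞ q^{n(2n−1)} · (∏_{j=1}^{2n}(1+q^j))^{−1} hold. -/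
open PowerSeries

/-!
Write `P_n = (-q; q)_n`. The partial sums of the two sides of the first identity differ by an
explicit error of high order:
`(∑_{k=1}^n (q^{k(3k-1)/2}(1 - q^k) - (-1)^{k-1} q^{k(k+1)/2} / P_k)) · P_n`
`  = (-1)^n q^{(n+1)(n+2)/2} R_n`
with the polynomial `R_n = ∑_{j<n} (-1)^j q^{j(n+1)} P_j`. By induction
on `n` this reduces to the relation
`q^{n+2} R_{n+1} + (1 + q^{n+1}) R_n = 1 - (-1)^n q^{n(n+1)} (1 - q^{n+1}) P_{n+1}`,
which telescopes because `P_{j+1} = (1 + q^{j+1}) P_j`. The coefficient of `q^N` of either side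
is that of its partial sum with `N + 1` terms, and for `n = N + 1` the error has order `> N`.

The second identity follows by grouping the alternating terms in pairs:
`q^{m(2m-1)} / P_{2m-1} - q^{m(2m+1)} / P_{2m} = q^{m(2m-1)} / P_{2m}`.
-/

open Finset

namespace FineIdentity

variable {A : Type*} [CommRing A] (q : A)

/-- `(-q; q)_n`. -/
def negQPochhammer (n : ℕ) : A := ∏ j ∈ range n, (1 + q ^ (j + 1))

def pentagonalTerm (m : ℕ) : A := q ^ ((m + 1) * (3 * (m + 1) - 1) / 2) * (1 - q ^ (m + 1))

noncomputable def alternatingTerm (m : ℕ) : A :=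
  (-1) ^ (m + 1 - 1) * q ^ ((m + 1) * (m + 1 + 1) / 2) * Ring.inverse (negQPochhammer q (m + 1))

noncomputable def pairedTerm (m : ℕ) : A :=
  q ^ ((m + 1) * (2 * (m + 1) - 1)) * Ring.inverse (negQPochhammer q (2 * (m + 1)))

def remainder (n : ℕ) : A := ∑ j ∈ range n, (-1) ^ j * q ^ (j * (n + 1)) * negQPochhammer q j

lemma negQPochhammer_zero : negQPochhammer q 0 = 1 :=
  prod_range_zero _

lemma negQPochhammer_succ (n : ℕ) :
    negQPochhammer q (n + 1) = negQPochhammer q n * (1 + q ^ (n + 1)) :=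
  prod_range_succ _ _

lemma remainder_telescope (n : ℕ) :
    q ^ (n + 2) * remainder q (n + 1) + remainder q n * (1 + q ^ (n + 1)) =
      1 + (-1) ^ (n + 1) * q ^ (n * (n + 1)) * (1 - q ^ (n + 1)) * negQPochhammer q (n + 1) := by
  set a : ℕ → A := fun j => (-1) ^ j * q ^ (j * (n + 1)) * negQPochhammer q j with ha
  have hterm : ∀ j, (-1) ^ j * q ^ ((j + 1) * (n + 2)) * negQPochhammer q j
      + (a j + a j * q ^ (n + 1)) = a j - a (j + 1) := by
    intro j
    simp only [ha, negQPochhammer_succ]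
    ring
  calc q ^ (n + 2) * remainder q (n + 1) + remainder q n * (1 + q ^ (n + 1))
      = ∑ j ∈ range (n + 1), (-1) ^ j * q ^ ((j + 1) * (n + 2)) * negQPochhammer q j
          + ∑ j ∈ range n, (a j + a j * q ^ (n + 1)) := by
        rw [remainder, remainder, mul_sum, sum_mul]
        congr 1 <;> refine sum_congr rfl fun j _ => ?_
        · ring
        · rw [ha]; ring
    _ = ∑ j ∈ range n, (a j - a (j + 1))
          + (-1) ^ n * q ^ ((n + 1) * (n + 2)) * negQPochhammer q n := by
        rw [sum_range_succ, ← sum_congr rfl fun j _ => hterm j]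
        simp only [sum_add_distrib]
        ring
    _ = _ := by
        rw [sum_range_sub']
        simp only [ha, negQPochhammer_succ, negQPochhammer_zero, pow_zero, zero_mul]
        ring

lemma succ_le_triangle (n : ℕ) : n + 1 ≤ (n + 1) * (n + 2) / 2 :=
  (Nat.le_div_iff_mul_le two_pos).2 (Nat.mul_le_mul_left _ (by omega))

lemma triangle_succ (n : ℕ) : (n + 2) * (n + 3) / 2 = (n + 1) * (n + 2) / 2 + (n + 2) := by
  rw [show (n + 2) * (n + 3) = (n + 1) * (n + 2) + (n + 2) * 2 by ring,
    Nat.add_mul_div_right _ _ two_pos]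

lemma pentagonalTerm_eq (n : ℕ) :
    pentagonalTerm q n = q ^ ((n + 1) * (n + 2) / 2) * q ^ (n * (n + 1)) * (1 - q ^ (n + 1)) := by
  rw [pentagonalTerm, ← pow_add, show 3 * (n + 1) - 1 = 3 * n + 2 by omega,
    show (n + 1) * (3 * n + 2) = (n + 1) * (n + 2) + n * (n + 1) * 2 by ring,
    Nat.add_mul_div_right _ _ two_pos]

lemma pow_dvd_alternatingTerm (n : ℕ) : q ^ ((n + 1) * (n + 2) / 2) ∣ alternatingTerm q n :=
  (dvd_mul_left _ _).mul_right _

variable {q}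

lemma alternatingTerm_mul_negQPochhammer (hq : ∀ n, IsUnit (negQPochhammer q n)) (n : ℕ) :
    alternatingTerm q n * negQPochhammer q (n + 1) = (-1) ^ n * q ^ ((n + 1) * (n + 2) / 2) := by
  rw [alternatingTerm, Ring.inverse_mul_cancel_right _ _ (hq _), Nat.add_sub_cancel]

lemma sum_pentagonalTerm_sub_alternatingTerm_mul (hq : ∀ n, IsUnit (negQPochhammer q n))
    (n : ℕ) :
    (∑ k ∈ range n, (pentagonalTerm q k - alternatingTerm q k)) * negQPochhammer q n =
      (-1) ^ n * q ^ ((n + 1) * (n + 2) / 2) * remainder q n := by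
  induction n with
  | zero => simp [remainder]
  | succ n ih =>
    have hsign : (-1 : A) ^ n * (-1) ^ n = 1 := by rw [← pow_add, Even.neg_one_pow ⟨n, rfl⟩]
    have htel := remainder_telescope q n
    rw [negQPochhammer_succ] at htel
    rw [sum_range_succ, add_mul, sub_mul, alternatingTerm_mul_negQPochhammer hq, pentagonalTerm_eq,
      triangle_succ, negQPochhammer_succ q n, ← mul_assoc, ih, pow_add]
    linear_combination (-1) ^ n * q ^ ((n + 1) * (n + 2) / 2) * htel
      + q ^ ((n + 1) * (n + 2) / 2) * q ^ (n * (n + 1)) * (q ^ (2 * n + 2) - 1)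
        * negQPochhammer q n * hsign

lemma pow_dvd_sum_pentagonalTerm_sub_alternatingTerm (hq : ∀ n, IsUnit (negQPochhammer q n))
    (n : ℕ) :
    q ^ ((n + 1) * (n + 2) / 2) ∣
      ∑ k ∈ range n, (pentagonalTerm q k - alternatingTerm q k) := by
  refine ⟨(-1) ^ n * remainder q n * Ring.inverse (negQPochhammer q n), ?_⟩
  calc ∑ k ∈ range n, (pentagonalTerm q k - alternatingTerm q k)
      = (∑ k ∈ range n, (pentagonalTerm q k - alternatingTerm q k)) * negQPochhammer q n
          * Ring.inverse (negQPochhammer q n) := (Ring.mul_inverse_cancel_right _ _ (hq n)).symm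
    _ = _ := by rw [sum_pentagonalTerm_sub_alternatingTerm_mul hq]; ring

lemma inverse_negQPochhammer (hq : ∀ n, IsUnit (negQPochhammer q n)) (n : ℕ) :
    Ring.inverse (negQPochhammer q n) =
      (1 + q ^ (n + 1)) * Ring.inverse (negQPochhammer q (n + 1)) := by
  have hfactor : IsUnit (1 + q ^ (n + 1)) := by
    have := hq (n + 1)
    rw [negQPochhammer_succ] at this
    exact isUnit_of_mul_isUnit_right this
  rw [negQPochhammer_succ, Ring.mul_inverse_rev, ← mul_assoc, Ring.mul_inverse_cancel _ hfactor,
    one_mul]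

lemma alternatingTerm_add_alternatingTerm (hq : ∀ n, IsUnit (negQPochhammer q n)) (m : ℕ) :
    alternatingTerm q (2 * m) + alternatingTerm q (2 * m + 1) = pairedTerm q m := by
  have e1 : (2 * m + 1) * (2 * m + 1 + 1) / 2 = (m + 1) * (2 * m + 1) := by
    rw [show (2 * m + 1) * (2 * m + 1 + 1) = (m + 1) * (2 * m + 1) * 2 by ring,
      Nat.mul_div_cancel _ two_pos]
  have e2 : (2 * m + 1 + 1) * (2 * m + 1 + 1 + 1) / 2 = (m + 1) * (2 * m + 1) + (2 * m + 2) := by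
    rw [← e1, triangle_succ]
  rw [alternatingTerm, alternatingTerm, pairedTerm, e1, e2, inverse_negQPochhammer hq,
    show 2 * (m + 1) - 1 = 2 * m + 1 by omega, show 2 * (m + 1) = 2 * m + 1 + 1 by ring,
    Nat.add_sub_cancel, Nat.add_sub_cancel, pow_succ (-1 : A) (2 * m),
    Even.neg_one_pow ⟨m, two_mul m⟩, pow_add]
  ring

lemma sum_range_two_mul_alternatingTerm (hq : ∀ n, IsUnit (negQPochhammer q n)) (M : ℕ) :
    ∑ k ∈ range (2 * M), alternatingTerm q k = ∑ m ∈ range M, pairedTerm q m := by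
  induction M with
  | zero => simp
  | succ M ih =>
    rw [show 2 * (M + 1) = 2 * M + 1 + 1 by ring, sum_range_succ, sum_range_succ, ih,
      sum_range_succ, add_assoc, alternatingTerm_add_alternatingTerm hq]

section PowerSeries

variable {R : Type*} [CommRing R]

lemma isUnit_negQPochhammer_X (n : ℕ) : IsUnit (negQPochhammer (X : R⟦X⟧) n) := by
  rw [isUnit_iff_constantCoeff, negQPochhammer, map_prod]
  simp

lemma coeff_seriesSum (f : ℕ → R⟦X⟧) (N : ℕ) :
    coeff N (seriesSum f) = coeff N (∑ n ∈ range (N + 1), f n) := by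
  rw [seriesSum, coeff_mk, map_sum]

lemma coeff_seriesSum_eq_coeff_sum {f : ℕ → R⟦X⟧} (hf : ∀ n, X ^ (n + 1) ∣ f n)
    {N M : ℕ} (hNM : N < M) : coeff N (seriesSum f) = coeff N (∑ n ∈ range M, f n) := by
  rw [coeff_seriesSum, map_sum, map_sum]
  refine sum_subset (range_subset_range.2 hNM) fun n _ hn => X_pow_dvd_iff.mp (hf n) N ?_
  simp only [mem_range, not_lt] at hn
  omega

theorem seriesSum_pentagonalTerm_eq_alternatingTerm :
    seriesSum (pentagonalTerm (X : R⟦X⟧)) = seriesSum (alternatingTerm X) := by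
  ext N
  rw [coeff_seriesSum, coeff_seriesSum, ← sub_eq_zero, ← map_sub, ← sum_sub_distrib]
  have hdvd := pow_dvd_sum_pentagonalTerm_sub_alternatingTerm
    (isUnit_negQPochhammer_X (R := R)) (N + 1)
  exact X_pow_dvd_iff.mp hdvd N ((succ_le_triangle (N + 1)).trans_lt' (by omega))

theorem seriesSum_alternatingTerm_eq_pairedTerm :
    seriesSum (alternatingTerm (X : R⟦X⟧)) = seriesSum (pairedTerm X) := by
  ext N
  have hdvd (n : ℕ) : (X : R⟦X⟧) ^ (n + 1) ∣ alternatingTerm X n :=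
    (pow_dvd_pow X (succ_le_triangle n)).trans (pow_dvd_alternatingTerm X n)
  rw [coeff_seriesSum_eq_coeff_sum hdvd (show N < 2 * (N + 1) by omega),
    sum_range_two_mul_alternatingTerm isUnit_negQPochhammer_X, coeff_seriesSum]

end PowerSeries

end FineIdentity

/-- Lemma 4.1. -/
theorem stmt16 :
    seriesSum (fun m =>
        (X : PowerSeries ℚ) ^ ((m + 1) * (3 * (m + 1) - 1) / 2) * (1 - X ^ (m + 1))) =
      seriesSum (fun m =>
        (-1 : PowerSeries ℚ) ^ (m + 1 - 1) * X ^ ((m + 1) * (m + 1 + 1) / 2)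
          * Ring.inverse (∏ j ∈ Finset.range (m + 1), (1 + X ^ (j + 1)))) ∧
    seriesSum (fun m =>
        (X : PowerSeries ℚ) ^ ((m + 1) * (3 * (m + 1) - 1) / 2) * (1 - X ^ (m + 1))) =
      seriesSum (fun m =>
        (X : PowerSeries ℚ) ^ ((m + 1) * (2 * (m + 1) - 1))
          * Ring.inverse (∏ j ∈ Finset.range (2 * (m + 1)), (1 + X ^ (j + 1)))) := by
  have h := FineIdentity.seriesSum_pentagonalTerm_eq_alternatingTerm (R := ℚ)
  exact ⟨h, h.trans FineIdentity.seriesSum_alternatingTerm_eq_pairedTerm⟩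
end
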